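/- arXiv:1610.01872 — 11 statements merged into one kernel-verified Lean document; each statement's English description precedes it below -/
import Mathlib

section
/- Let β > 1 be a quadratic irrational algebraic integer that is not a Pisot number. Then for every α ∈ [0,1) the map T_{α,β} does not have matching. -/
open MeasureTheory Finset

/-- The generalised β-transformation `x ↦ βx + α (mod 1)`. -/
noncomputable def Tmap (β α x : ℝ) : ℝ := Int.fract (β * x + α)

/-- The orbit of a point `x` under `Tmap β α`. -/
noncomputable def orb (β α x : ℝ) : ℕ → ℝ
  | 0 => x
  | n + 1 => Tmap β α (orb β α x n)

/-- The critical orbit of `0⁺`: `uSeq β α n = u_n`, with `u_1 = α`,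
`u_{n+1} = T_{α,β}(u_n)`. -/
noncomputable def uSeq (β α : ℝ) (n : ℕ) : ℝ := orb β α α (n - 1)

/-- The critical orbit of `0⁻`: `vSeq β α n = v_n`, with `v_1 = β + α - ⌊β + α⌋`,
`v_{n+1} = T_{α,β}(v_n)`. -/
noncomputable def vSeq (β α : ℝ) (n : ℕ) : ℝ := orb β α (Int.fract (β + α)) (n - 1)

/-- `T_{α,β}` has matching if `u_n = v_n` for some `n ≥ 1`. -/
def HasMatching (β α : ℝ) : Prop := ∃ n : ℕ, 1 ≤ n ∧ uSeq β α n = vSeq β α n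

/-- The bifurcation set `A_β` of parameters `α ∈ [0,1)` without matching. -/
def bifSet (β : ℝ) : Set ℝ := {α | α ∈ Set.Ico (0 : ℝ) 1 ∧ ¬ HasMatching β α}

/-- A Pisot number: a real algebraic integer `β > 1` all of whose Galois conjugates
other than `β` itself have absolute value strictly less than `1`. -/
def IsPisot (β : ℝ) : Prop :=
  1 < β ∧ IsIntegral ℤ β ∧
    ∀ z : ℂ, (Polynomial.aeval z) (minpoly ℚ β) = 0 → z ≠ (β : ℂ) → ‖z‖ < 1

theorem no_matching_of_not_pisot (β : ℝ) (hβ : 1 < β) (hirr : Irrational β)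
    (hint : IsIntegral ℤ β) (hquad : (minpoly ℚ β).natDegree = 2)
    (hnp : ¬ IsPisot β) :
    ∀ α ∈ Set.Ico (0 : ℝ) 1, ¬ HasMatching β α := by
  intro α hα hm
  classical
  -- minimal polynomial over ℤ
  have hmono : (minpoly ℤ β).Monic := minpoly.monic hint
  have hmapeq : minpoly ℚ β = (minpoly ℤ β).map (algebraMap ℤ ℚ) :=
    minpoly.isIntegrallyClosed_eq_field_fractions ℚ ℝ hint
  have hdeg : (minpoly ℤ β).natDegree = 2 := by
    rw [hmapeq, Polynomial.natDegree_map_eq_of_injective] at hquad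
    · exact hquad
    · exact fun a b h => by exact_mod_cast h
  set p : ℤ := -(minpoly ℤ β).coeff 1 with hp
  set q : ℤ := -(minpoly ℤ β).coeff 0 with hq
  have hc2 : (minpoly ℤ β).coeff 2 = 1 := by
    have := hmono.coeff_natDegree; rwa [hdeg] at this
  have hβ2 : β ^ 2 = (p : ℝ) * β + (q : ℝ) := by
    have h0 := minpoly.aeval ℤ β
    rw [Polynomial.aeval_eq_sum_range, hdeg] at h0
    simp [Finset.sum_range_succ, hc2, zsmul_eq_mul] at h0
    simp only [hp, hq, Int.cast_neg]
    linarith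
  -- linear independence of 1, β over ℤ
  have hli : ∀ a b : ℤ, (a : ℝ) + (b : ℝ) * β = 0 → a = 0 ∧ b = 0 := by
    intro a b h
    by_cases hb : b = 0
    · subst hb
      simp at h
      exact ⟨by exact_mod_cast h, rfl⟩
    · exfalso
      apply hirr
      refine ⟨-a / b, ?_⟩
      have hb' : (b : ℝ) ≠ 0 := Int.cast_ne_zero.mpr hb
      push_cast
      field_simp
      linarith
  -- from not Pisot, the conjugate p - β has absolute value ≥ 1
  have hβ' : 1 ≤ |(p : ℝ) - β| := by
    by_contra hlt
    push_neg at hlt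
    refine hnp ⟨hβ, hint, fun z hz hne => ?_⟩
    have hz' : (Polynomial.aeval z) (minpoly ℤ β) = 0 := by
      rw [hmapeq, Polynomial.aeval_map_algebraMap] at hz; exact hz
    have hzeq : z ^ 2 - (p : ℂ) * z - (q : ℂ) = 0 := by
      rw [Polynomial.aeval_eq_sum_range, hdeg] at hz'
      simp [Finset.sum_range_succ, hc2, zsmul_eq_mul] at hz'
      simp only [hp, hq, Int.cast_neg]
      linear_combination hz'
    have hcC : ((β : ℂ)) ^ 2 = (p : ℂ) * (β : ℂ) + (q : ℂ) := by exact_mod_cast hβ2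
    have hfac : (z - (β : ℂ)) * (z - (((p : ℝ) - β : ℝ) : ℂ)) = 0 := by
      push_cast
      linear_combination hzeq - hcC
    rcases mul_eq_zero.mp hfac with h1 | h2
    · exact absurd (sub_eq_zero.mp h1) hne
    · rw [sub_eq_zero.mp h2, Complex.norm_real, Real.norm_eq_abs]
      exact hlt
  -- orbits stay in [0,1)
  have hv0 : Int.fract (β + α) ∈ Set.Ico (0 : ℝ) 1 :=
    ⟨Int.fract_nonneg _, Int.fract_lt_one _⟩
  have horb : ∀ x : ℝ, x ∈ Set.Ico (0 : ℝ) 1 → ∀ m, orb β α x m ∈ Set.Ico (0 : ℝ) 1 := by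
    intro x hx m
    induction m with
    | zero => exact hx
    | succ k _ => exact ⟨Int.fract_nonneg _, Int.fract_lt_one _⟩
  -- step difference formula
  have hstep : ∀ x y : ℝ, Tmap β α y - Tmap β α x
      = β * (y - x) - ((⌊β * y + α⌋ : ℝ) - (⌊β * x + α⌋ : ℝ)) := by
    intro x y
    simp only [Tmap, Int.fract]
    ring
  -- difference of orbits lies in ℤ[β]
  have hrep : ∀ k : ℕ, ∃ a b : ℤ,
      orb β α (Int.fract (β + α)) k - orb β α α k = (a : ℝ) + (b : ℝ) * β := by
    intro k
    induction k with
    | zero =>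
      refine ⟨-⌊β + α⌋, 1, ?_⟩
      simp only [orb, Int.fract]
      push_cast
      ring
    | succ k ih =>
      obtain ⟨a, b, hab⟩ := ih
      refine ⟨b * q - (⌊β * orb β α (Int.fract (β + α)) k + α⌋ - ⌊β * orb β α α k + α⌋),
              a + b * p, ?_⟩
      have hs := hstep (orb β α α k) (orb β α (Int.fract (β + α)) k)
      show Tmap β α _ - Tmap β α _ = _
      rw [hs]
      push_cast
      linear_combination β * hab + (b : ℝ) * hβ2
  -- extract minimal matching index
  obtain ⟨n, hn1, hn2⟩ := hm
  have hex : ∃ m : ℕ, orb β α α m = orb β α (Int.fract (β + α)) m := ⟨n - 1, hn2⟩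
  obtain ⟨m₀, hspec, hmin⟩ : ∃ m : ℕ, orb β α α m = orb β α (Int.fract (β + α)) m ∧
      ∀ j < m, ¬ orb β α α j = orb β α (Int.fract (β + α)) j :=
    ⟨Nat.find hex, Nat.find_spec hex, fun j hj => Nat.find_min hex hj⟩
  cases m₀ with
  | zero =>
    have h0 : α = Int.fract (β + α) := hspec
    rw [Int.fract] at h0
    exact hirr.ne_int ⌊β + α⌋ (by linarith)
  | succ k =>
    have hne : orb β α α k ≠ orb β α (Int.fract (β + α)) k := hmin k (Nat.lt_succ_self k)
    set u := orb β α α k with hu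
    set v := orb β α (Int.fract (β + α)) k with hv
    have hspec' : Tmap β α u = Tmap β α v := hspec
    have hs := hstep u v
    rw [hspec'] at hs
    -- so β * (v - u) = integer
    have hβc : β * (v - u) = ((⌊β * v + α⌋ - ⌊β * u + α⌋ : ℤ) : ℝ) := by
      push_cast
      linarith [hs]
    set c : ℤ := ⌊β * v + α⌋ - ⌊β * u + α⌋ with hc
    obtain ⟨a, b, hab⟩ := hrep k
    have hkey : ((b * q - c : ℤ) : ℝ) + ((a + b * p : ℤ) : ℝ) * β = 0 := by
      push_cast
      linear_combination hβc - β * hab - (b : ℝ) * hβ2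
    obtain ⟨h1, h2⟩ := hli _ _ hkey
    have hbne : b ≠ 0 := by
      intro hb0
      apply hne
      have ha0 : a = 0 := by rw [hb0] at h2; simpa using h2
      rw [hb0, ha0] at hab
      simp at hab
      linarith [hab]
    have hd : v - u = (b : ℝ) * (β - (p : ℝ)) := by
      have ha : (a : ℝ) = -((b : ℝ) * (p : ℝ)) := by
        have : a = -(b * p) := by linarith [h2]
        rw [this]; push_cast; ring
      rw [hab, ha]; ring
    have hub := horb α hα k
    have hvb := horb _ hv0 k
    have hlt1 : |v - u| < 1 := by
      rw [abs_lt]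
      constructor <;> [linarith [hub.1, hub.2, hvb.1, hvb.2]; linarith [hub.1, hub.2, hvb.1, hvb.2]]
    have h1b : (1 : ℝ) ≤ |(b : ℝ)| := by
      have := Int.one_le_abs hbne
      exact_mod_cast this
    have habs2 : (1 : ℝ) ≤ |v - u| := by
      rw [hd, abs_mul, abs_sub_comm]
      nlinarith [hβ', h1b]
    linarith
end

section
/- Let β > 1 be a quadratic Pisot number. Then the bifurcation set A_β has Lebesgue measure zero; equivalently, for Lebesgue-almost every α ∈ [0,1) the map T_{α,β} has matching. -/
open MeasureTheory Finset

/-! ### Section A : geometric sums -/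

noncomputable def sg (β : ℝ) (n : ℕ) : ℝ := ∑ i ∈ Finset.range n, β ^ i

lemma sg_succ (β : ℝ) (n : ℕ) : sg β (n + 1) = β * sg β n + 1 := by
  simp only [sg, geom_sum_succ]

lemma sg_one (β : ℝ) : sg β 1 = 1 := by simp [sg]

lemma sg_nonneg {β : ℝ} (hβ : 0 ≤ β) (n : ℕ) : 0 ≤ sg β n :=
  Finset.sum_nonneg fun i _ => pow_nonneg hβ i

lemma sg_ge_one {β : ℝ} (hβ : 0 ≤ β) {n : ℕ} (hn : 1 ≤ n) : 1 ≤ sg β n := by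
  obtain ⟨m, rfl⟩ := Nat.exists_eq_add_of_le hn
  rw [add_comm, sg_succ]
  nlinarith [sg_nonneg hβ m]

lemma sg_pos {β : ℝ} (hβ : 0 ≤ β) {n : ℕ} (hn : 1 ≤ n) : 0 < sg β n :=
  lt_of_lt_of_le one_pos (sg_ge_one hβ hn)

lemma sg_ge_pow {β : ℝ} (hβ : 0 ≤ β) {n : ℕ} (hn : 1 ≤ n) : β ^ (n - 1) ≤ sg β n := by
  apply Finset.single_le_sum (f := fun i => β ^ i) (fun i _ => pow_nonneg hβ i)
  simp [Finset.mem_range]; omega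

lemma sg_ge_nat {β : ℝ} (hβ : 1 ≤ β) (n : ℕ) : (n : ℝ) ≤ sg β n := by
  calc (n : ℝ) = ∑ _i ∈ Finset.range n, (1 : ℝ) := by simp
  _ ≤ sg β n := Finset.sum_le_sum fun i _ => one_le_pow₀ hβ

/-! ### Section A2 : pieces -/

noncomputable def eW (p : ℝ × ℝ × ℝ) : ℝ := max 0 (p.2.2 - p.2.1)

lemma eW_nonneg (p : ℝ × ℝ × ℝ) : 0 ≤ eW p := le_max_left _ _

noncomputable def childP (β w : ℝ) (ℓ : ℕ → ℝ) (k : ℕ) (p : ℝ × ℝ × ℝ) (j : ℤ) : ℝ × ℝ × ℝ :=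
  (β * p.1 + j,
   max p.2.1 ((ℓ (k+2) + (β * p.1 + j)) / sg β (k+2)),
   min p.2.2 ((ℓ (k+2) + w + (β * p.1 + j)) / sg β (k+2)))

noncomputable def JF (β : ℝ) : Finset ℤ := Finset.Icc 0 (⌊β⌋ + 1)

noncomputable def PL (β w : ℝ) (ℓ : ℕ → ℝ) : ℕ → List (ℝ × ℝ × ℝ)
  | 0 => [(0, ℓ 1, ℓ 1 + w)]
  | k+1 => (PL β w ℓ k).flatMap fun p => (JF β).toList.map (childP β w ℓ k p)

/-- width invariant -/
lemma width_inv {β w : ℝ} {ℓ : ℕ → ℝ} (hβ : 1 < β) (hw : 0 ≤ w) :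
    ∀ k, ∀ p ∈ PL β w ℓ k, eW p ≤ w / sg β (k+1) := by
  intro k
  cases k with
  | zero =>
    intro p hp
    simp only [PL, List.mem_singleton] at hp
    subst hp
    simp [eW, sg_one, hw]
  | succ k =>
    intro p hp
    simp only [PL, List.mem_flatMap, List.mem_map] at hp
    obtain ⟨q, _, j, _, rfl⟩ := hp
    have hs : 0 < sg β (k+2) := sg_pos (by linarith) (by omega)
    simp only [childP, eW]
    apply max_le (by positivity)
    have : min q.2.2 ((ℓ (k+2) + w + (β * q.1 + j)) / sg β (k+2))
        - max q.2.1 ((ℓ (k+2) + (β * q.1 + j)) / sg β (k+2))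
        ≤ (ℓ (k+2) + w + (β * q.1 + j)) / sg β (k+2)
        - (ℓ (k+2) + (β * q.1 + j)) / sg β (k+2) := by
      have h1 := min_le_right q.2.2 ((ℓ (k+2) + w + (β * q.1 + j)) / sg β (k+2))
      have h2 := le_max_right q.2.1 ((ℓ (k+2) + (β * q.1 + j)) / sg β (k+2))
      linarith
    calc _ ≤ _ := this
    _ = w / sg β (k+2) := by ring

/-! ### Section A3 : the gap lemma -/

lemma gap_sum (W D lo : ℝ) (hW : 0 ≤ W) (hWD : W ≤ D) (A0 : ℝ)
    (f g : ℤ → ℝ)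
    (hlof : ∀ j : ℤ, lo ≤ f j)
    (hAf : ∀ j : ℤ, A0 + j * D ≤ f j)
    (hgA : ∀ j : ℤ, g j ≤ A0 + j * D + W) :
    ∀ (T : Finset ℤ), ∀ (H : ℝ), (∀ j ∈ T, g j ≤ H) → (∀ j ∈ T, f j ≤ g j) → lo ≤ H →
      ∑ j ∈ T, (g j - f j) ≤ (H - lo) - ((T.card : ℝ) - 1) * (D - W) := by
  intro T
  induction T using Finset.induction_on_max with
  | empty =>
    intro H _ _ hloH
    simp only [Finset.sum_empty, Finset.card_empty]
    push_cast
    linarith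
  | insert a T hmax ih =>
    intro H hgH hfg hloH
    have haT : a ∉ T := fun h => lt_irrefl a (hmax a h)
    rw [Finset.sum_insert haT, Finset.card_insert_of_notMem haT]
    by_cases hT : T = ∅
    · subst hT
      simp only [Finset.sum_empty, Finset.card_empty]
      have h1 : g a ≤ H := hgH a (Finset.mem_insert_self a _)
      have h2 := hlof a
      push_cast
      linarith
    · obtain ⟨j₀, hj₀⟩ := Finset.nonempty_iff_ne_empty.2 hT
      have key : ∀ j ∈ T, g j ≤ A0 + a * D - (D - W) := by
        intro j hj
        have hja : j < a := hmax j hj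
        have : (j : ℝ) * D ≤ ((a : ℝ) - 1) * D := by
          apply mul_le_mul_of_nonneg_right _ (by linarith)
          have h5 : j + 1 ≤ a := hja
          have h6 : ((j : ℝ) + 1) ≤ (a : ℝ) := by exact_mod_cast h5
          linarith
        have := hgA j
        linarith
      have hloH' : lo ≤ A0 + a * D - (D - W) := by
        have h1 := hlof j₀
        have h2 := hfg j₀ (Finset.mem_insert_of_mem hj₀)
        have h3 := key j₀ hj₀
        linarith
      have IH := ih (A0 + a * D - (D - W)) key
        (fun j hj => hfg j (Finset.mem_insert_of_mem hj)) hloH'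
      have h1 : g a ≤ H := hgH a (Finset.mem_insert_self a _)
      have h2 : A0 + a * D ≤ f a := hAf a
      push_cast
      linarith

/-! ### Section A4 : per-piece potential step -/

set_option maxHeartbeats 1000000 in
lemma piece_step
    (β w θ γ βp : ℝ) (ℓ : ℕ → ℝ) (k : ℕ)
    (hβ : 1 < β) (hw0 : 0 < w) (hw1 : w < 1)
    (hθ0 : 0 < θ) (hθ1 : θ ≤ 1) (hwθ : w ≤ θ)
    (hγ0 : 0 ≤ γ)
    (hγ1 : βp ^ θ ≤ γ)
    (hγ2 : 2*(1-θ) + θ*βp - θ*((1-w)/w) ≤ γ)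
    (hsβp : sg β (k+2) ≤ βp * sg β (k+1))
    (p : ℝ × ℝ × ℝ) (hq : eW p ≤ w / sg β (k+1)) :
    ∑ j ∈ JF β, (sg β (k+2) * eW (childP β w ℓ k p j)) ^ θ
      ≤ γ * (sg β (k+1) * eW p) ^ θ := by
  have hβ0 : (0:ℝ) < β := by linarith
  have hs : 0 < sg β (k+1) := sg_pos (by linarith) (by omega)
  have hs' : 0 < sg β (k+2) := sg_pos (by linarith) (by omega)
  have hβp : 0 < βp := by nlinarith
  set s := sg β (k+1) with hsdef
  set s' := sg β (k+2) with hs'def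
  set q := s * eW p with hqdef
  have hq0 : 0 ≤ q := mul_nonneg hs.le (eW_nonneg p)
  have hqw : q ≤ w := by
    rw [hqdef]
    calc s * eW p ≤ s * (w / s) := by
          apply mul_le_mul_of_nonneg_left hq hs.le
    _ = w := by field_simp
  set e : ℤ → ℝ := fun j => eW (childP β w ℓ k p j) with hedef
  have he0 : ∀ j, 0 ≤ e j := fun j => eW_nonneg _
  have heq : ∀ j, e j ≤ eW p := by
    intro j
    simp only [hedef, childP, eW]
    apply max_le (le_max_left _ _)
    have h1 := min_le_left p.2.2 ((ℓ (k+2) + w + (β * p.1 + j)) / s')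
    have h2 := le_max_left p.2.1 ((ℓ (k+2) + (β * p.1 + j)) / s')
    have : p.2.2 - p.2.1 ≤ max 0 (p.2.2 - p.2.1) := le_max_right _ _
    linarith
  set T : Finset ℤ := (JF β).filter (fun j => 0 < e j) with hTdef
  have hsum0 : ∑ j ∈ JF β, (s' * e j) ^ θ = ∑ j ∈ T, (s' * e j) ^ θ := by
    symm
    apply Finset.sum_subset (Finset.filter_subset _ _)
    intro j hj hjT
    have : ¬ (0 < e j) := by
      intro h
      exact hjT (Finset.mem_filter.2 ⟨hj, h⟩)
    have : e j = 0 := le_antisymm (not_lt.1 this) (he0 j)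
    rw [this, mul_zero, Real.zero_rpow hθ0.ne']
  rw [hsum0]
  have hrpos : 0 ≤ (q : ℝ) ^ θ := Real.rpow_nonneg hq0 _
  -- trivial case : empty T
  by_cases hTe : T = ∅
  · rw [hTe, Finset.sum_empty]
    positivity
  -- T nonempty; then parent is nondegenerate
  obtain ⟨j₁, hj₁⟩ := Finset.nonempty_iff_ne_empty.2 hTe
  have hj₁pos : 0 < e j₁ := (Finset.mem_filter.1 hj₁).2
  have hppos : 0 < eW p := lt_of_lt_of_le hj₁pos (heq j₁)
  have hqpos : 0 < q := mul_pos hs hppos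
  -- gap lemma application
  have hlohi : p.2.1 ≤ p.2.2 := by
    by_contra hcon
    push_neg at hcon
    have : eW (childP β w ℓ k p j₁) = 0 := by
      simp only [childP, eW]
      apply max_eq_left
      have h1 := min_le_left p.2.2 ((ℓ (k+2) + w + (β * p.1 + j₁)) / s')
      have h2 := le_max_left p.2.1 ((ℓ (k+2) + (β * p.1 + j₁)) / s')
      linarith
    rw [hedef] at hj₁pos
    simp only [this] at hj₁pos
    exact lt_irrefl 0 hj₁pos
  have heWp : eW p = p.2.2 - p.2.1 := max_eq_right (by linarith)
  have hfg' : ∀ j ∈ T, (childP β w ℓ k p j).2.1 ≤ (childP β w ℓ k p j).2.2 := by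
    intro j hj
    have hpos : 0 < e j := (Finset.mem_filter.1 hj).2
    by_contra hcon
    push_neg at hcon
    have : e j = 0 := by
      simp only [hedef, childP, eW] at *
      exact max_eq_left (by linarith)
    linarith
  have hee : ∀ j ∈ T, e j = (childP β w ℓ k p j).2.2 - (childP β w ℓ k p j).2.1 := by
    intro j hj
    simp only [hedef, eW]
    exact max_eq_right (by linarith [hfg' j hj])
  have hgap : ∑ j ∈ T, e j ≤ (p.2.2 - p.2.1) - ((T.card : ℝ) - 1) * ((1 - w)/s') := by
    have hWD : w / s' ≤ 1 / s' := by gcongr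
    have hG := gap_sum (w / s') (1 / s') p.2.1 (by positivity) hWD
      ((ℓ (k+2) + β * p.1) / s')
      (fun j => (childP β w ℓ k p j).2.1) (fun j => (childP β w ℓ k p j).2.2)
      (fun j => le_max_left _ _)
      (fun j => le_max_of_le_right (le_of_eq (by rw [← hs'def]; ring)))
      (fun j => le_trans (min_le_right _ _) (le_of_eq (by rw [← hs'def]; ring)))
      T p.2.2 (fun j _ => min_le_left _ _) hfg' hlohi
    have hsum : ∑ j ∈ T, e j
        = ∑ j ∈ T, ((childP β w ℓ k p j).2.2 - (childP β w ℓ k p j).2.1) :=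
      Finset.sum_congr rfl hee
    rw [hsum]
    have : (1 - w)/s' = 1/s' - w/s' := by ring
    rw [this]
    exact hG
  -- now the main estimate
  rcases Nat.lt_or_ge T.card 2 with hN | hN
  · -- exactly one child
    have h1 : T.card = 1 := by
      have h2 : 0 < T.card := Finset.card_pos.2 ⟨j₁, hj₁⟩
      omega
    obtain ⟨j, hj⟩ := Finset.card_eq_one.1 h1
    rw [hj, Finset.sum_singleton]
    have h1 : s' * e j ≤ βp * q := by
      calc s' * e j ≤ s' * eW p := by
            apply mul_le_mul_of_nonneg_left (heq j) hs'.le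
      _ ≤ (βp * s) * eW p := by
            apply mul_le_mul_of_nonneg_right hsβp (eW_nonneg p)
      _ = βp * q := by rw [hqdef]; ring
    calc (s' * e j) ^ θ ≤ (βp * q) ^ θ := by
          apply Real.rpow_le_rpow (mul_nonneg hs'.le (he0 j)) h1 hθ0.le
    _ = βp ^ θ * q ^ θ := Real.mul_rpow hβp.le hq0
    _ ≤ γ * q ^ θ := by apply mul_le_mul_of_nonneg_right hγ1 hrpos
  · -- at least two children
    set N : ℝ := (T.card : ℝ) with hNdef
    have hN2 : (2:ℝ) ≤ N := by rw [hNdef]; exact_mod_cast hN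
    set S : ℝ := ∑ j ∈ T, s' * e j with hSdef
    have hS0 : 0 ≤ S := Finset.sum_nonneg fun j _ => mul_nonneg hs'.le (he0 j)
    have hSb : S ≤ βp * q - (N - 1) * (1 - w) := by
      have h1 : S = s' * ∑ j ∈ T, e j := by rw [hSdef, Finset.mul_sum]
      have h2 : s' * ∑ j ∈ T, e j
          ≤ s' * ((p.2.2 - p.2.1) - (N - 1) * ((1 - w)/s')) := by
        apply mul_le_mul_of_nonneg_left hgap hs'.le
      have h3 : s' * ((p.2.2 - p.2.1) - (N - 1) * ((1 - w)/s'))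
          = s' * (p.2.2 - p.2.1) - (N - 1) * (1 - w) := by
        field_simp
      have h4 : s' * (p.2.2 - p.2.1) ≤ βp * q := by
        calc s' * (p.2.2 - p.2.1) = s' * eW p := by rw [heWp]
        _ ≤ (βp * s) * eW p := mul_le_mul_of_nonneg_right hsβp (eW_nonneg p)
        _ = βp * q := by rw [hqdef]; ring
      linarith
    have hchild : ∀ j ∈ T, (s' * e j) ^ θ ≤ q ^ θ * ((1 - θ) + θ * (s' * e j / q)) := by
      intro j hj
      set x := s' * e j / q with hxdef
      have hx0 : 0 ≤ x := div_nonneg (mul_nonneg hs'.le (he0 j)) hq0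
      have hAM : x ^ θ ≤ (1 - θ) + θ * x := by
        have := Real.geom_mean_le_arith_mean2_weighted
          (by linarith : (0:ℝ) ≤ 1 - θ) hθ0.le (zero_le_one) hx0 (by ring)
        rw [Real.one_rpow, one_mul, mul_one] at this
        linarith
      have hxe : s' * e j = q * x := by
        rw [hxdef]; field_simp
      calc (s' * e j) ^ θ = (q * x) ^ θ := by rw [hxe]
      _ = q ^ θ * x ^ θ := Real.mul_rpow hq0 hx0
      _ ≤ q ^ θ * ((1 - θ) + θ * x) := by
            apply mul_le_mul_of_nonneg_left hAM hrpos
    have hsum2 : ∑ j ∈ T, (s' * e j) ^ θ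
        ≤ q ^ θ * (N * (1 - θ) + θ * (S / q)) := by
      calc ∑ j ∈ T, (s' * e j) ^ θ
          ≤ ∑ j ∈ T, q ^ θ * ((1 - θ) + θ * (s' * e j / q)) :=
            Finset.sum_le_sum hchild
      _ = q ^ θ * (N * (1 - θ) + θ * (S / q)) := by
            rw [← Finset.mul_sum]
            congr 1
            rw [Finset.sum_add_distrib, Finset.sum_const, nsmul_eq_mul, ← Finset.mul_sum,
              ← Finset.sum_div]
    have hkey : (1 - θ) ≤ θ * ((1 - w)/w) := by
      rw [mul_div_assoc', le_div_iff₀ hw0]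
      nlinarith
    have hdq : (1 - w)/w ≤ (1 - w)/q :=
      div_le_div_of_nonneg_left (by linarith) hqpos hqw
    have hSq : S / q ≤ βp - (N - 1) * ((1 - w) / q) := by
      have h1 : S / q ≤ (βp * q - (N - 1) * (1 - w)) / q := by gcongr
      have h2 : (βp * q - (N - 1) * (1 - w)) / q = βp - (N - 1) * ((1 - w) / q) := by
        field_simp
      linarith
    have hlin : N * (1 - θ) + θ * (S / q) ≤ γ := by
      have h5 : θ * (S / q) ≤ θ * βp - θ * (N - 1) * ((1 - w)/q) := by
        have := mul_le_mul_of_nonneg_left hSq hθ0.le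
        nlinarith
      have h6 : θ * (N - 1) * ((1 - w)/w) ≤ θ * (N - 1) * ((1 - w)/q) := by
        apply mul_le_mul_of_nonneg_left hdq
        nlinarith
      have h7 : (N - 2) * (1 - θ) ≤ (N - 2) * (θ * ((1 - w)/w)) := by
        apply mul_le_mul_of_nonneg_left hkey
        linarith
      nlinarith [hγ2]
    calc ∑ j ∈ T, (s' * e j) ^ θ ≤ q ^ θ * (N * (1 - θ) + θ * (S / q)) := hsum2
    _ ≤ q ^ θ * γ := mul_le_mul_of_nonneg_left hlin hrpos
    _ = γ * (s * eW p) ^ θ := by rw [hqdef]; ring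

/-! ### Section A5 : list sums, Phi, and the measure bound -/

lemma list_bind_map_sum {A B : Type*} (l : List A) (g : A → List B) (f : B → ℝ) :
    ((l.flatMap g).map f).sum = (l.map (fun a => ((g a).map f).sum)).sum := by
  induction l with
  | nil => simp
  | cons a t ih => simp [ih]

lemma list_map_sum_le {A : Type*} (l : List A) (f g : A → ℝ) (h : ∀ a ∈ l, f a ≤ g a) :
    (l.map f).sum ≤ (l.map g).sum := by
  induction l with
  | nil => simp
  | cons a t ih =>
    simp only [List.map_cons, List.sum_cons]
    exact add_le_add (h a (by simp)) (ih fun x hx => h x (by simp [hx]))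

lemma list_map_sum_nonneg {A : Type*} (l : List A) (f : A → ℝ) (h : ∀ a ∈ l, 0 ≤ f a) :
    0 ≤ (l.map f).sum := by
  induction l with
  | nil => simp
  | cons a t ih =>
    simp only [List.map_cons, List.sum_cons]
    have := h a (by simp)
    have := ih fun x hx => h x (by simp [hx])
    linarith

lemma list_sum_map_mul_left {A : Type*} (l : List A) (c : ℝ) (f : A → ℝ) :
    (l.map (fun a => c * f a)).sum = c * (l.map f).sum := by
  induction l with
  | nil => simp
  | cons a t ih => simp [ih]; ring

lemma finset_sum_toList {A : Type*} (s : Finset A) (f : A → ℝ) :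
    (s.toList.map f).sum = ∑ j ∈ s, f j := by
  rw [Finset.sum_eq_multiset_sum, ← Finset.coe_toList s, Multiset.map_coe, Multiset.sum_coe]

noncomputable def Phi (β w θ : ℝ) (ℓ : ℕ → ℝ) (k : ℕ) : ℝ :=
  ((PL β w ℓ k).map (fun p => (sg β (k+1) * eW p) ^ θ)).sum

noncomputable def Mw (β w : ℝ) (ℓ : ℕ → ℝ) (k : ℕ) : ℝ :=
  ((PL β w ℓ k).map eW).sum

lemma Phi_nonneg {β : ℝ} (hβ : 0 ≤ β) (w θ : ℝ) (ℓ : ℕ → ℝ) (k : ℕ) : 0 ≤ Phi β w θ ℓ k :=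
  list_map_sum_nonneg _ _ fun p _ => Real.rpow_nonneg
    (mul_nonneg (sg_nonneg hβ _) (eW_nonneg p)) _

lemma sg_mono {β : ℝ} (hβ : 0 ≤ β) {m n : ℕ} (h : m ≤ n) : sg β m ≤ sg β n := by
  apply Finset.sum_le_sum_of_subset_of_nonneg (Finset.range_subset_range.2 h)
  intro i _ _
  exact pow_nonneg hβ i

lemma Phi_step
    (β w θ γ βp : ℝ) (ℓ : ℕ → ℝ) (k : ℕ)
    (hβ : 1 < β) (hw0 : 0 < w) (hw1 : w < 1)
    (hθ0 : 0 < θ) (hθ1 : θ ≤ 1) (hwθ : w ≤ θ)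
    (hγ0 : 0 ≤ γ)
    (hγ1 : βp ^ θ ≤ γ)
    (hγ2 : 2*(1-θ) + θ*βp - θ*((1-w)/w) ≤ γ)
    (hsβp : sg β (k+2) ≤ βp * sg β (k+1)) :
    Phi β w θ ℓ (k+1) ≤ γ * Phi β w θ ℓ k := by
  have h1 : Phi β w θ ℓ (k+1)
      = ((PL β w ℓ k).map (fun p =>
          ∑ j ∈ JF β, (sg β (k+2) * eW (childP β w ℓ k p j)) ^ θ)).sum := by
    show ((((PL β w ℓ k).flatMap _).map _)).sum = _
    rw [list_bind_map_sum]
    congr 1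
    apply List.map_congr_left
    intro p _
    rw [List.map_map, finset_sum_toList]
    rfl
  rw [h1]
  calc ((PL β w ℓ k).map (fun p =>
          ∑ j ∈ JF β, (sg β (k+2) * eW (childP β w ℓ k p j)) ^ θ)).sum
      ≤ ((PL β w ℓ k).map (fun p => γ * (sg β (k+1) * eW p) ^ θ)).sum := by
        apply list_map_sum_le
        intro p hp
        exact piece_step β w θ γ βp ℓ k hβ hw0 hw1 hθ0 hθ1 hwθ hγ0 hγ1 hγ2 hsβp p
          (width_inv hβ hw0.le k p hp)
  _ = γ * Phi β w θ ℓ k := list_sum_map_mul_left _ _ _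

lemma Mw_le_Phi (β w θ : ℝ) (ℓ : ℕ → ℝ) (k : ℕ)
    (hβ : 1 < β) (hw0 : 0 < w) (hθ0 : 0 < θ) (hθ1 : θ ≤ 1) :
    Mw β w ℓ k ≤ (w ^ (1-θ) / sg β (k+1)) * Phi β w θ ℓ k := by
  have hs : 0 < sg β (k+1) := sg_pos (by linarith) (by omega)
  have h1 : Mw β w ℓ k ≤ ((PL β w ℓ k).map
      (fun p => (w ^ (1-θ) / sg β (k+1)) * (sg β (k+1) * eW p) ^ θ)).sum := by
    apply list_map_sum_le
    intro p hp
    set q := sg β (k+1) * eW p with hqdef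
    have hq0 : 0 ≤ q := mul_nonneg hs.le (eW_nonneg p)
    have hqw : q ≤ w := by
      have := width_inv hβ hw0.le k p hp
      rw [hqdef]
      calc sg β (k+1) * eW p ≤ sg β (k+1) * (w / sg β (k+1)) := by
            apply mul_le_mul_of_nonneg_left this hs.le
      _ = w := by field_simp
    rcases eq_or_lt_of_le hq0 with hq | hq
    · have hW0 : eW p = 0 := by
        rcases mul_eq_zero.1 hq.symm with h | h
        · exact absurd h hs.ne'
        · exact h
      rw [hW0]
      positivity
    · have key : q ≤ w ^ (1-θ) * q ^ θ := by
        have h2 : q ^ (1-θ) ≤ w ^ (1-θ) :=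
          Real.rpow_le_rpow hq0 hqw (by linarith)
        have h3 : q = q ^ θ * q ^ (1-θ) := by
          rw [← Real.rpow_add hq]
          norm_num
        calc q = q ^ θ * q ^ (1-θ) := h3
        _ ≤ q ^ θ * w ^ (1-θ) := by
              apply mul_le_mul_of_nonneg_left h2 (Real.rpow_nonneg hq0 _)
        _ = w ^ (1-θ) * q ^ θ := by ring
      have : eW p = q / sg β (k+1) := by rw [hqdef]; field_simp
      rw [this]
      rw [div_le_iff₀ hs]
      calc q ≤ w ^ (1-θ) * q ^ θ := key
      _ = (w ^ (1-θ) / sg β (k+1)) * q ^ θ * sg β (k+1) := by field_simp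
  calc Mw β w ℓ k ≤ _ := h1
  _ = (w ^ (1-θ) / sg β (k+1)) * Phi β w θ ℓ k := list_sum_map_mul_left _ _ _

/-! ### Section A6 : coverage -/

lemma uSeq_succ (β α : ℝ) (n : ℕ) (hn : 1 ≤ n) :
    uSeq β α (n+1) = Int.fract (β * uSeq β α n + α) := by
  unfold uSeq
  have h1 : n + 1 - 1 = (n - 1) + 1 := by omega
  rw [h1]
  rfl

lemma cover {β w : ℝ} {ℓ : ℕ → ℝ} (hβ : 1 < β)
    (hℓ0 : ∀ n, 1 ≤ n → 0 ≤ ℓ n) (hℓ1 : ∀ n, 1 ≤ n → ℓ n + w ≤ 1)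
    (α : ℝ) (hα : ∀ n, 1 ≤ n → uSeq β α n ∈ Set.Ico (ℓ n) (ℓ n + w)) :
    ∀ k, ∃ p ∈ PL β w ℓ k, p.2.1 ≤ α ∧ α ≤ p.2.2 ∧
      uSeq β α (k+1) = sg β (k+1) * α - p.1 := by
  intro k
  induction k with
  | zero =>
    refine ⟨(0, ℓ 1, ℓ 1 + w), by simp [PL], ?_, ?_, ?_⟩
    · exact (hα 1 le_rfl).1
    · exact le_of_lt (hα 1 le_rfl).2
    · show uSeq β α 1 = sg β 1 * α - 0
      rw [sg_one]
      simp [uSeq, orb]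
  | succ k ih =>
    obtain ⟨p, hp, hlo, hhi, hform⟩ := ih
    have hs' : 0 < sg β (k+2) := sg_pos (by linarith) (by omega)
    have hu1 : uSeq β α (k+1) ∈ Set.Ico (ℓ (k+1)) (ℓ (k+1) + w) := hα (k+1) (by omega)
    have hu01 : 0 ≤ uSeq β α (k+1) ∧ uSeq β α (k+1) < 1 := by
      constructor
      · exact le_trans (hℓ0 (k+1) (by omega)) hu1.1
      · exact lt_of_lt_of_le hu1.2 (hℓ1 (k+1) (by omega))
    set m : ℤ := ⌊β * uSeq β α (k+1) + α⌋ with hmdef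
    have hαlo : 0 ≤ α := by
      have := hα 1 le_rfl
      have h0 := hℓ0 1 le_rfl
      have : ℓ 1 ≤ uSeq β α 1 := this.1
      simp only [uSeq, Nat.sub_self, orb] at this
      linarith
    have hαhi : α < 1 := by
      have h1 := (hα 1 le_rfl).2
      have h2 := hℓ1 1 le_rfl
      simp only [uSeq, Nat.sub_self, orb] at h1
      linarith
    have hval0 : 0 ≤ β * uSeq β α (k+1) + α := by nlinarith [hu01.1]
    have hval1 : β * uSeq β α (k+1) + α < β + 1 := by nlinarith [hu01.2]
    have hm0 : 0 ≤ m := Int.le_floor.2 (by exact_mod_cast hval0)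
    have hm1 : m ≤ ⌊β⌋ + 1 := by
      have h1 : (m:ℝ) ≤ β * uSeq β α (k+1) + α := Int.floor_le _
      have h2 : (m:ℝ) < β + 1 := lt_of_le_of_lt h1 hval1
      have h3 : β < (⌊β⌋ : ℝ) + 1 := Int.lt_floor_add_one β
      have : (m:ℝ) < ((⌊β⌋ + 2 : ℤ) : ℝ) := by push_cast; linarith
      have := Int.cast_lt.1 this
      omega
    have hmem : m ∈ JF β := Finset.mem_Icc.2 ⟨hm0, hm1⟩
    have hunext : uSeq β α (k+2) = β * uSeq β α (k+1) + α - m := by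
      rw [uSeq_succ β α (k+1) (by omega), hmdef]
      rw [Int.fract]
    have hform2 : uSeq β α (k+2) = sg β (k+2) * α - (β * p.1 + m) := by
      have hss : sg β (k+2) = β * sg β (k+1) + 1 := sg_succ β (k+1)
      rw [hunext, hform, hss]
      ring
    have hu2 : uSeq β α (k+2) ∈ Set.Ico (ℓ (k+2)) (ℓ (k+2) + w) := hα (k+2) (by omega)
    refine ⟨childP β w ℓ k p m, ?_, ?_, ?_, ?_⟩
    · show childP β w ℓ k p m ∈ PL β w ℓ (k+1)
      simp only [PL, List.mem_flatMap, List.mem_map]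
      exact ⟨p, hp, m, by rw [Finset.mem_toList]; exact hmem, rfl⟩
    · apply max_le hlo
      rw [div_le_iff₀ hs']
      have : ℓ (k+2) ≤ sg β (k+2) * α - (β * p.1 + m) := by
        rw [← hform2]; exact hu2.1
      linarith
    · apply le_min hhi
      rw [le_div_iff₀ hs']
      have : sg β (k+2) * α - (β * p.1 + m) ≤ ℓ (k+2) + w := by
        rw [← hform2]; exact le_of_lt hu2.2
      linarith
    · exact hform2

/-! ### Section A7 : volume bound and main survivor theorem -/

lemma vol_cover (l : List (ℝ × ℝ × ℝ)) (S : Set ℝ)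
    (h : ∀ α ∈ S, ∃ p ∈ l, p.2.1 ≤ α ∧ α ≤ p.2.2) :
    volume S ≤ ENNReal.ofReal ((l.map eW).sum) := by
  induction l generalizing S with
  | nil =>
    have hS : S = ∅ := Set.eq_empty_iff_forall_notMem.2 (fun α hα => by
      rcases h α hα with ⟨p, hp, _⟩
      simp at hp)
    simp [hS]
  | cons p t ih =>
    set T : Set ℝ := {α ∈ S | ∃ q ∈ t, q.2.1 ≤ α ∧ α ≤ q.2.2} with hTdef
    have hsub : S ⊆ Set.Icc p.2.1 p.2.2 ∪ T := by
      intro α hα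
      rcases h α hα with ⟨q, hq, h1, h2⟩
      rcases List.mem_cons.1 hq with rfl | hq'
      · exact Or.inl ⟨h1, h2⟩
      · exact Or.inr ⟨hα, q, hq', h1, h2⟩
    calc volume S ≤ volume (Set.Icc p.2.1 p.2.2 ∪ T) := measure_mono hsub
    _ ≤ volume (Set.Icc p.2.1 p.2.2) + volume T := measure_union_le _ _
    _ ≤ ENNReal.ofReal (eW p) + ENNReal.ofReal ((t.map eW).sum) := by
        apply add_le_add
        · rw [Real.volume_Icc]
          exact ENNReal.ofReal_le_ofReal (le_max_right _ _)
        · exact ih T (fun α hα => hα.2)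
    _ = ENNReal.ofReal (eW p + (t.map eW).sum) := by
        rw [ENNReal.ofReal_add (eW_nonneg p) (list_map_sum_nonneg _ _ fun q _ => eW_nonneg q)]
    _ = ENNReal.ofReal (((p :: t).map eW).sum) := by simp

theorem survivor_measure_zero
    (β w θ γ βp : ℝ) (ℓ : ℕ → ℝ) (k₀ : ℕ)
    (hβ : 1 < β) (hw0 : 0 < w) (hw1 : w < 1)
    (hθ0 : 0 < θ) (hθ1 : θ ≤ 1) (hwθ : w ≤ θ)
    (hγ0 : 0 ≤ γ) (hγβ : γ < β)
    (hγ1 : βp ^ θ ≤ γ)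
    (hγ2 : 2*(1-θ) + θ*βp - θ*((1-w)/w) ≤ γ)
    (hβp : β < βp)
    (hk₀ : 1 ≤ sg β (k₀+1) * (βp - β))
    (hℓ0 : ∀ n, 1 ≤ n → 0 ≤ ℓ n) (hℓ1 : ∀ n, 1 ≤ n → ℓ n + w ≤ 1) :
    volume {α : ℝ | ∀ n, 1 ≤ n → uSeq β α n ∈ Set.Ico (ℓ n) (ℓ n + w)} = 0 := by
  set S := {α : ℝ | ∀ n, 1 ≤ n → uSeq β α n ∈ Set.Ico (ℓ n) (ℓ n + w)} with hSdef
  have hβ0 : (0:ℝ) < β := by linarith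
  -- step bound for k ≥ k₀
  have hstep : ∀ k, k₀ ≤ k → Phi β w θ ℓ (k+1) ≤ γ * Phi β w θ ℓ k := by
    intro k hk
    apply Phi_step β w θ γ βp ℓ k hβ hw0 hw1 hθ0 hθ1 hwθ hγ0 hγ1 hγ2
    have hmono : sg β (k₀+1) ≤ sg β (k+1) := sg_mono (by linarith) (by omega)
    have hs : 0 < sg β (k+1) := sg_pos (by linarith) (by omega)
    have h1 : 1 ≤ sg β (k+1) * (βp - β) := by
      calc (1:ℝ) ≤ sg β (k₀+1) * (βp - β) := hk₀
      _ ≤ sg β (k+1) * (βp - β) := by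
          apply mul_le_mul_of_nonneg_right hmono (by linarith)
    rw [sg_succ]
    nlinarith
  -- geometric decay of Phi
  have hgeo : ∀ i : ℕ, Phi β w θ ℓ (k₀ + i) ≤ γ ^ i * Phi β w θ ℓ k₀ := by
    intro i
    induction i with
    | zero => simp
    | succ i ih =>
      have h1 : Phi β w θ ℓ (k₀ + i + 1) ≤ γ * Phi β w θ ℓ (k₀ + i) :=
        hstep (k₀ + i) (by omega)
      calc Phi β w θ ℓ (k₀ + (i+1)) = Phi β w θ ℓ ((k₀ + i) + 1) := by ring_nf
      _ ≤ γ * Phi β w θ ℓ (k₀ + i) := h1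
      _ ≤ γ * (γ ^ i * Phi β w θ ℓ k₀) := mul_le_mul_of_nonneg_left ih hγ0
      _ = γ ^ (i+1) * Phi β w θ ℓ k₀ := by ring
  -- volume bound for each i
  set C := w ^ (1-θ) * Phi β w θ ℓ k₀ with hCdef
  have hC0 : 0 ≤ C := mul_nonneg (Real.rpow_nonneg hw0.le _) (Phi_nonneg hβ0.le w θ ℓ k₀)
  have hvol : ∀ i : ℕ, volume S ≤ ENNReal.ofReal (C * (γ / β) ^ i) := by
    intro i
    set k := k₀ + i with hkdef
    have hs : 0 < sg β (k+1) := sg_pos (by linarith) (by omega)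
    have h1 : volume S ≤ ENNReal.ofReal (Mw β w ℓ k) := by
      apply vol_cover
      intro α hα
      obtain ⟨p, hp, h2, h3, _⟩ := cover hβ hℓ0 hℓ1 α hα k
      exact ⟨p, hp, h2, h3⟩
    have h2 : Mw β w ℓ k ≤ (w ^ (1-θ) / sg β (k+1)) * Phi β w θ ℓ k :=
      Mw_le_Phi β w θ ℓ k hβ hw0 hθ0 hθ1
    have h3 : (w ^ (1-θ) / sg β (k+1)) * Phi β w θ ℓ k ≤ C * (γ / β) ^ i := by
      have hΦ : Phi β w θ ℓ k ≤ γ ^ i * Phi β w θ ℓ k₀ := hgeo i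
      have hΦ0 : 0 ≤ Phi β w θ ℓ k := Phi_nonneg hβ0.le w θ ℓ k
      have hsgi : (β : ℝ) ^ i ≤ sg β (k+1) := by
        calc (β:ℝ) ^ i ≤ β ^ k := by
              apply pow_le_pow_right₀ (by linarith) (by omega)
        _ = β ^ ((k+1) - 1) := by norm_num
        _ ≤ sg β (k+1) := sg_ge_pow (by linarith) (by omega)
      have hpow : 0 < (β:ℝ) ^ i := pow_pos hβ0 i
      calc (w ^ (1-θ) / sg β (k+1)) * Phi β w θ ℓ k
          ≤ (w ^ (1-θ) / sg β (k+1)) * (γ ^ i * Phi β w θ ℓ k₀) := by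
            apply mul_le_mul_of_nonneg_left hΦ (by positivity)
      _ ≤ (w ^ (1-θ) / β ^ i) * (γ ^ i * Phi β w θ ℓ k₀) := by
            apply mul_le_mul_of_nonneg_right
            · exact div_le_div_of_nonneg_left (Real.rpow_nonneg hw0.le _) hpow hsgi
            · exact mul_nonneg (pow_nonneg hγ0 i) (Phi_nonneg hβ0.le w θ ℓ k₀)
      _ = C * (γ / β) ^ i := by
            rw [hCdef, div_pow]
            field_simp
    calc volume S ≤ ENNReal.ofReal (Mw β w ℓ k) := h1
    _ ≤ ENNReal.ofReal (C * (γ / β) ^ i) :=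
        ENNReal.ofReal_le_ofReal (le_trans h2 h3)
  -- conclude via tendsto
  have hr0 : 0 ≤ γ / β := div_nonneg hγ0 hβ0.le
  have hr1 : γ / β < 1 := (div_lt_one hβ0).2 hγβ
  have htend : Filter.Tendsto (fun i : ℕ => ENNReal.ofReal (C * (γ / β) ^ i))
      Filter.atTop (nhds 0) := by
    have h1 : Filter.Tendsto (fun i : ℕ => C * (γ / β) ^ i) Filter.atTop (nhds 0) := by
      have := tendsto_pow_atTop_nhds_zero_of_lt_one hr0 hr1
      have h2 := this.const_mul C
      simpa using h2
    have h2 : Filter.Tendsto ENNReal.ofReal (nhds 0) (nhds 0) := by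
      have := ENNReal.continuous_ofReal.tendsto (0:ℝ)
      simpa using this
    exact h2.comp h1
  have := ge_of_tendsto' htend (fun i => hvol i)
  simpa using this

/-! ### Section B : existence of parameters -/

lemma exists_params (β w : ℝ) (hβ : 1 < β) (hw0 : 0 < w) (hw1 : w < 1) :
    ∃ θ γ βp : ℝ, ∃ k₀ : ℕ,
      0 < θ ∧ θ ≤ 1 ∧ w ≤ θ ∧ 0 ≤ γ ∧ γ < β ∧ βp ^ θ ≤ γ ∧
      2*(1-θ) + θ*βp - θ*((1-w)/w) ≤ γ ∧ β < βp ∧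
      1 ≤ sg β (k₀+1) * (βp - β) := by
  have hβ0 : (0:ℝ) < β := by linarith
  set g : ℝ := (1-w)/w with hgdef
  have hg0 : 0 < g := div_pos (by linarith) hw0
  set r : ℝ := max 0 (2-β) / (max 0 (2-β) + g/2) with hrdef
  have hr0 : 0 ≤ r := div_nonneg (le_max_left _ _) (by nlinarith [le_max_left (0:ℝ) (2-β)])
  have hr1 : r < 1 := by
    rw [hrdef, div_lt_one (by nlinarith [le_max_left (0:ℝ) (2-β)])]
    linarith
  set θ : ℝ := (1 + max w r)/2 with hθdef
  have hmax1 : max w r < 1 := max_lt hw1 hr1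
  have hθw : w ≤ θ := by
    have := le_max_left w r
    rw [hθdef]
    linarith [hw1]
  have hθr : r < θ := by
    have := le_max_right w r
    rw [hθdef]
    linarith
  have hθ0 : 0 < θ := lt_of_lt_of_le hw0 hθw
  have hθ1 : θ < 1 := by rw [hθdef]; linarith
  have hlogβ : 0 < Real.log β := Real.log_pos hβ
  set ε : ℝ := min (g/2) ((1-θ) * Real.log β / 2) with hεdef
  have hε0 : 0 < ε := lt_min (by linarith) (by nlinarith [mul_pos (show (0:ℝ) < 1-θ by linarith) hlogβ])
  set βp : ℝ := β + ε with hβpdef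
  have hβp1 : β < βp := by rw [hβpdef]; linarith
  have hβp0 : 0 < βp := by linarith
  -- the rpow bound
  have hbound1 : βp ^ θ < β := by
    have h1 : Real.log βp ≤ Real.log β + ε := by
      have h2 : Real.log (βp / β) ≤ βp / β - 1 := Real.log_le_sub_one_of_pos (by positivity)
      have h3 : Real.log (βp / β) = Real.log βp - Real.log β :=
        Real.log_div (by positivity) (by positivity)
      have h4 : βp / β - 1 = ε / β := by rw [hβpdef]; field_simp; ring
      have h5 : ε / β ≤ ε := by
        rw [div_le_iff₀ hβ0]
        have := mul_le_mul_of_nonneg_left hβ.le hε0.le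
        linarith
      linarith
    have h6 : Real.log βp * θ < Real.log β := by
      have h7 : ε ≤ (1-θ) * Real.log β / 2 := min_le_right _ _
      have h8 : Real.log βp * θ ≤ (Real.log β + ε) * θ := by
        apply mul_le_mul_of_nonneg_right h1 hθ0.le
      have h9 : (Real.log β + ε) * θ = θ * Real.log β + θ * ε := by ring
      have h10 : θ * ε ≤ ε := by
        have := mul_le_mul_of_nonneg_right hθ1.le hε0.le
        linarith
      have h11 : θ * Real.log β + ε < Real.log β := by
        have hpos := mul_pos (show (0:ℝ) < 1-θ by linarith) hlogβ
        nlinarith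
      linarith
    rw [Real.rpow_def_of_pos hβp0]
    calc Real.exp (Real.log βp * θ) < Real.exp (Real.log β) := Real.exp_lt_exp.2 h6
    _ = β := Real.exp_log hβ0
  -- the linear bound
  have hbound2 : 2*(1-θ) + θ*βp - θ*g < β := by
    have hεg : ε ≤ g/2 := min_le_left _ _
    have hθε : θ * ε ≤ θ * (g/2) := mul_le_mul_of_nonneg_left hεg hθ0.le
    rcases le_or_gt (2-β) 0 with h | h
    · nlinarith [mul_pos hθ0 hg0, mul_nonneg (sub_nonneg.2 hθ1.le) (neg_nonneg.2 h)]
    · have hm : (max 0 (2-β)) = 2-β := max_eq_right h.le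
      have h1 : r * ((2-β) + g/2) = 2-β := by
        rw [hrdef, hm]
        field_simp
      have h2 : (2-β) < θ * ((2-β) + g/2) := by
        have hX : (0:ℝ) < (2-β)+g/2 := by linarith
        have h2' := mul_lt_mul_of_pos_right hθr hX
        rw [h1] at h2'
        exact h2'
      nlinarith
  set γ : ℝ := max (βp ^ θ) (2*(1-θ) + θ*βp - θ*g) with hγdef
  have hγ0 : 0 ≤ γ := le_trans (Real.rpow_nonneg hβp0.le θ) (le_max_left _ _)
  have hγβ : γ < β := max_lt hbound1 hbound2
  -- choose k₀
  obtain ⟨k₀, hk₀⟩ : ∃ k₀ : ℕ, 1/ε ≤ (k₀:ℝ) + 1 := by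
    obtain ⟨n, hn⟩ := exists_nat_ge (1/ε)
    exact ⟨n, by push_cast; linarith⟩
  refine ⟨θ, γ, βp, k₀, hθ0, hθ1.le, hθw, hγ0, hγβ, le_max_left _ _, ?_, hβp1, ?_⟩
  · rw [hgdef] at *
    exact le_max_right _ _
  · have h1 : (k₀:ℝ) + 1 ≤ sg β (k₀+1) := by
      have := sg_ge_nat hβ.le (k₀+1)
      push_cast at this ⊢
      linarith
    have h2 : 1/ε ≤ sg β (k₀+1) := le_trans hk₀ h1
    have h3 : βp - β = ε := by rw [hβpdef]; ring
    rw [h3]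
    rw [div_le_iff₀ hε0] at h2
    linarith

/-! ### Section C : fract helpers and the matching chain -/

lemma fract_add_lt (x c : ℝ) (hc : 0 ≤ c) (h : Int.fract x + c < 1) :
    Int.fract (x + c) = Int.fract x + c := by
  have h1 : x + c = (⌊x⌋ : ℝ) + (Int.fract x + c) := by
    rw [Int.fract]; ring
  rw [h1, Int.fract_intCast_add, Int.fract_eq_self.2 ⟨by linarith [Int.fract_nonneg x], h⟩]

lemma fract_add_ge (x c : ℝ) (hc : c < 1) (h : 1 ≤ Int.fract x + c) :
    Int.fract (x + c) = Int.fract x + c - 1 := by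
  have h1 : x + c = ((⌊x⌋ + 1 : ℤ) : ℝ) + (Int.fract x + c - 1) := by
    push_cast
    rw [Int.fract]; ring
  rw [h1, Int.fract_intCast_add, Int.fract_eq_self.2
    ⟨by linarith, by linarith [Int.fract_lt_one x]⟩]

lemma fract_add_intcast (x : ℝ) (m : ℤ) : Int.fract (x + m) = Int.fract x :=
  Int.fract_add_intCast x m

lemma vSeq_succ (β α : ℝ) (n : ℕ) (hn : 1 ≤ n) :
    vSeq β α (n+1) = Int.fract (β * vSeq β α n + α) := by
  unfold vSeq
  have h1 : n + 1 - 1 = (n - 1) + 1 := by omega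
  rw [h1]
  rfl

lemma match_next (β α : ℝ) (N : ℕ) (hN : 1 ≤ N) (t : ℝ) (m : ℤ)
    (hβt : β * t = (m : ℝ)) (h : vSeq β α N = uSeq β α N + t) :
    uSeq β α (N+1) = vSeq β α (N+1) := by
  rw [uSeq_succ β α N hN, vSeq_succ β α N hN, h]
  have : β * (uSeq β α N + t) + α = (β * uSeq β α N + α) + (m:ℝ) := by
    rw [← hβt]; ring
  rw [this, fract_add_intcast]

/-- The chain lemma for the case `B ≥ 1` (i.e. `A < β < A+1`). -/
lemma chain_case1 (β : ℝ) (A B : ℤ) (α : ℝ) (hβ : 1 < β)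
    (hw0 : 0 < β - A) (hw1 : β - A < 1) (hB : β * (β - A) = (B:ℝ))
    (hα0 : 0 ≤ α) (hα1 : α < 1) (hnm : ¬ HasMatching β α) :
    ∀ n, 1 ≤ n →
      (vSeq β α n - uSeq β α n = (if n % 2 = 1 then (β - A) - 1 else 1 - (β - A))) ∧
      uSeq β α n ∈ Set.Ico (if n % 2 = 1 then 1 - (β - A) else 0)
        ((if n % 2 = 1 then 1 - (β - A) else 0) + (β - A)) := by
  set w : ℝ := β - A with hwdef
  have hu1 : uSeq β α 1 = α := by simp [uSeq, orb]
  -- base case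
  have base : vSeq β α 1 - uSeq β α 1 = w - 1 ∧ uSeq β α 1 ∈ Set.Ico (1-w) ((1-w)+w) := by
    have hv1 : vSeq β α 1 = Int.fract (β + α) := by simp [vSeq, orb]
    have hm0 : (A:ℝ) ≤ β + α := by linarith
    have hm1 : β + α < (A:ℝ) + 2 := by linarith
    have hfl : ⌊β + α⌋ = A ∨ ⌊β + α⌋ = A + 1 := by
      have h1 : A ≤ ⌊β + α⌋ := Int.le_floor.2 hm0
      have h2 : ⌊β + α⌋ ≤ A + 1 := by
        have h3 : (⌊β + α⌋ : ℝ) ≤ β + α := Int.floor_le _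
        have h4 : (⌊β + α⌋ : ℝ) < (A:ℝ) + 2 := lt_of_le_of_lt h3 hm1
        have : ⌊β + α⌋ < A + 2 := by exact_mod_cast h4
        omega
      omega
    rcases hfl with hfl | hfl
    · -- matching at n = 2, contradiction
      exfalso
      apply hnm
      refine ⟨2, by norm_num, ?_⟩
      have hveq : vSeq β α 1 = uSeq β α 1 + w := by
        rw [hv1, hu1, Int.fract, hfl]
        push_cast
        rw [hwdef]; ring
      exact match_next β α 1 le_rfl w B hB hveq
    · have hveq : vSeq β α 1 - uSeq β α 1 = w - 1 := by
        rw [hv1, hu1, Int.fract, hfl]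
        push_cast
        rw [hwdef]; ring
      refine ⟨hveq, ?_, ?_⟩
      · rw [hu1]
        have h5 : ((A:ℝ) + 1) ≤ β + α := by
          have := Int.floor_le (β + α)
          rw [hfl] at this
          push_cast at this
          linarith
        rw [hwdef]; linarith
      · rw [hu1]; linarith
  -- inductive step
  intro n hn
  induction n with
  | zero => omega
  | succ n ih =>
    rcases Nat.eq_or_lt_of_le hn with h1 | h1
    · -- n + 1 = 1
      have : n = 0 := by omega
      subst this
      simpa using base
    · -- n ≥ 1
      have hn1 : 1 ≤ n := by omega
      obtain ⟨hd, hu⟩ := ih hn1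
      set x : ℝ := β * uSeq β α n + α with hxdef
      have hunext : uSeq β α (n+1) = Int.fract x := uSeq_succ β α n hn1
      set y := uSeq β α (n+1) with hydef
      have hyfr : Int.fract x = y := hunext.symm
      have hy0 : 0 ≤ y := by
        have h9 := Int.fract_nonneg x
        rw [hyfr] at h9
        exact h9
      have hy1 : y < 1 := by
        have h9 := Int.fract_lt_one x
        rw [hyfr] at h9
        exact h9
      have hs : vSeq β α (n+1) = Int.fract (x + β * (vSeq β α n - uSeq β α n)) := by
        rw [vSeq_succ β α n hn1, hxdef]
        ring_nf
      rcases Nat.even_or_odd n with hpar | hpar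
      · -- n even : d n = 1 - w, n+1 odd
        have hmod : n % 2 = 0 := Nat.even_iff.1 hpar
        have hmod1 : (n+1) % 2 = 1 := by omega
        rw [if_neg (by omega)] at hd
        have hv : vSeq β α (n+1) = Int.fract (x + w) := by
          rw [hs, hd]
          have h2 : x + β * (1 - w) = (x + w) + ((A - B : ℤ) : ℝ) := by
            push_cast
            linear_combination -hB - hwdef
          rw [h2, fract_add_intcast]
        rcases lt_or_ge (y + w) 1 with hc | hc
        · -- matching at n+2, contradiction
          exfalso
          apply hnm
          refine ⟨n+2, by omega, ?_⟩
          have hveq : vSeq β α (n+1) = uSeq β α (n+1) + w := by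
            rw [hv, fract_add_lt x w (by linarith) (by rw [hyfr]; exact hc), hyfr, hydef]
          exact match_next β α (n+1) (by omega) w B hB hveq
        · have hfw : Int.fract (x + w) = y + w - 1 := by
            rw [fract_add_ge x w (by linarith) (by rw [hyfr]; exact hc), hyfr]
          have hveq : vSeq β α (n+1) - uSeq β α (n+1) = w - 1 := by
            rw [hv, hfw, hydef]; ring
          refine ⟨by rw [if_pos hmod1]; exact hveq, ?_⟩
          rw [if_pos hmod1]
          exact ⟨by linarith, by linarith⟩
      · -- n odd : d n = w - 1, n+1 even
        have hmod : n % 2 = 1 := Nat.odd_iff.1 hpar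
        have hmod1 : ¬ ((n+1) % 2 = 1) := by omega
        rw [if_pos hmod] at hd
        have hv : vSeq β α (n+1) = Int.fract (x + (1 - w)) := by
          rw [hs, hd]
          have h2 : x + β * (w - 1) = (x + (1 - w)) + ((B - A - 1 : ℤ) : ℝ) := by
            push_cast
            linear_combination hB + hwdef
          rw [h2, fract_add_intcast]
        rcases lt_or_ge (y + (1 - w)) 1 with hc | hc
        · -- continue : v = y + 1 - w
          have hfw : Int.fract (x + (1 - w)) = y + (1 - w) := by
            rw [fract_add_lt x (1-w) (by linarith) (by rw [hyfr]; exact hc), hyfr]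
          have hveq : vSeq β α (n+1) - uSeq β α (n+1) = 1 - w := by
            rw [hv, hfw, hydef]; ring
          refine ⟨by rw [if_neg hmod1]; exact hveq, ?_⟩
          rw [if_neg hmod1]
          exact ⟨by linarith, by linarith⟩
        · -- matching at n+2, contradiction
          exfalso
          apply hnm
          refine ⟨n+2, by omega, ?_⟩
          have hfw : Int.fract (x + (1 - w)) = y + (1 - w) - 1 := by
            rw [fract_add_ge x (1-w) (by linarith) (by rw [hyfr]; exact hc), hyfr]
          have hveq : vSeq β α (n+1) = uSeq β α (n+1) + (-w) := by
            rw [hv, hfw, hydef]; ring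
          have hBneg : β * (-w) = ((-B : ℤ) : ℝ) := by
            push_cast
            linear_combination -hB
          exact match_next β α (n+1) (by omega) (-w) (-B) hBneg hveq

/-- The chain lemma for the case `B ≤ -1` (i.e. `A-1 < β < A`). -/
lemma chain_case2 (β : ℝ) (A C : ℤ) (α : ℝ) (hβ : 1 < β)
    (hw0 : 0 < (A:ℝ) - β) (hw1 : (A:ℝ) - β < 1) (hB : β * ((A:ℝ) - β) = (C:ℝ))
    (hα0 : 0 ≤ α) (hα1 : α < 1) (hnm : ¬ HasMatching β α) :
    ∀ n, 1 ≤ n →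
      (vSeq β α n - uSeq β α n = 1 - ((A:ℝ) - β)) ∧
      uSeq β α n ∈ Set.Ico (0:ℝ) (0 + ((A:ℝ) - β)) := by
  set w : ℝ := (A:ℝ) - β with hwdef
  have hu1 : uSeq β α 1 = α := by simp [uSeq, orb]
  have hCneg : β * (-w) = ((-C : ℤ) : ℝ) := by
    push_cast
    linear_combination -hB
  have base : vSeq β α 1 - uSeq β α 1 = 1 - w ∧ uSeq β α 1 ∈ Set.Ico (0:ℝ) (0 + w) := by
    have hv1 : vSeq β α 1 = Int.fract (β + α) := by simp [vSeq, orb]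
    have hfl : ⌊β + α⌋ = A - 1 ∨ ⌊β + α⌋ = A := by
      have h1 : A - 1 ≤ ⌊β + α⌋ := Int.le_floor.2 (by push_cast; linarith)
      have h2 : ⌊β + α⌋ ≤ A := by
        have h3 : (⌊β + α⌋ : ℝ) ≤ β + α := Int.floor_le _
        have h4 : (⌊β + α⌋ : ℝ) < (A:ℝ) + 1 := by linarith
        have : ⌊β + α⌋ < A + 1 := by exact_mod_cast h4
        omega
      omega
    rcases hfl with hfl | hfl
    · have hveq : vSeq β α 1 - uSeq β α 1 = 1 - w := by
        rw [hv1, hu1, Int.fract, hfl]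
        push_cast
        rw [hwdef]; ring
      refine ⟨hveq, hα0, ?_⟩
      have h5 : β + α < (A:ℝ) := by
        have h6 := Int.lt_floor_add_one (β + α)
        rw [hfl] at h6
        push_cast at h6
        linarith
      rw [hu1]
      linarith
    · exfalso
      apply hnm
      refine ⟨2, by norm_num, ?_⟩
      have hveq : vSeq β α 1 = uSeq β α 1 + (-w) := by
        rw [hv1, hu1, Int.fract, hfl]
        rw [hwdef]; ring
      exact match_next β α 1 le_rfl (-w) (-C) hCneg hveq
  intro n hn
  induction n with
  | zero => omega
  | succ n ih =>
    rcases Nat.eq_or_lt_of_le hn with h1 | h1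
    · have : n = 0 := by omega
      subst this
      simpa using base
    · have hn1 : 1 ≤ n := by omega
      obtain ⟨hd, hu⟩ := ih hn1
      set x : ℝ := β * uSeq β α n + α with hxdef
      have hunext : uSeq β α (n+1) = Int.fract x := uSeq_succ β α n hn1
      set y := uSeq β α (n+1) with hydef
      have hyfr : Int.fract x = y := hunext.symm
      have hy0 : 0 ≤ y := by
        have h9 := Int.fract_nonneg x
        rw [hyfr] at h9
        exact h9
      have hs : vSeq β α (n+1) = Int.fract (x + β * (vSeq β α n - uSeq β α n)) := by
        rw [vSeq_succ β α n hn1, hxdef]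
        ring_nf
      have hv : vSeq β α (n+1) = Int.fract (x + (1 - w)) := by
        rw [hs, hd]
        have h2 : x + β * (1 - w) = (x + (1 - w)) + ((A - 1 - C : ℤ) : ℝ) := by
          push_cast
          linear_combination -hB - hwdef
        rw [h2, fract_add_intcast]
      rcases lt_or_ge (y + (1 - w)) 1 with hc | hc
      · have hfw : Int.fract (x + (1 - w)) = y + (1 - w) := by
          rw [fract_add_lt x (1-w) (by linarith) (by rw [hyfr]; exact hc), hyfr]
        have hveq : vSeq β α (n+1) - uSeq β α (n+1) = 1 - w := by
          rw [hv, hfw, hydef]; ring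
        exact ⟨hveq, hy0, by linarith⟩
      · exfalso
        apply hnm
        refine ⟨n+2, by omega, ?_⟩
        have hfw : Int.fract (x + (1 - w)) = y + (1 - w) - 1 := by
          rw [fract_add_ge x (1-w) (by linarith) (by rw [hyfr]; exact hc), hyfr]
        have hveq : vSeq β α (n+1) = uSeq β α (n+1) + (-w) := by
          rw [hv, hfw, hydef]; ring
        exact match_next β α (n+1) (by omega) (-w) (-C) hCneg hveq


open Polynomial in
theorem quadratic_pisot_ae_matching (β : ℝ) (hPisot : IsPisot β)
    (hquad : (minpoly ℚ β).natDegree = 2) :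
    volume (bifSet β) = 0 ∧
      ∀ᵐ α : ℝ, α ∈ Set.Ico (0 : ℝ) 1 → HasMatching β α := by
  obtain ⟨hβ1, hint, hconj⟩ := hPisot
  have hβ0 : (0:ℝ) < β := by linarith
  -- extract the integer quadratic relation
  obtain ⟨A, B, hq, hroot⟩ : ∃ A B : ℤ, β^2 = A*β + B ∧
      ∀ z : ℂ, z = (A:ℂ) - (β:ℂ) → (Polynomial.aeval z) (minpoly ℚ β) = 0 := by
    have hmap : minpoly ℚ β = (minpoly ℤ β).map (algebraMap ℤ ℚ) := by
      have := minpoly.isIntegrallyClosed_eq_field_fractions ℚ ℝ hint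
      simpa using this
    have hmonic : (minpoly ℤ β).Monic := minpoly.monic hint
    have hdeg : (minpoly ℤ β).natDegree = 2 := by
      have := hmonic.natDegree_map (algebraMap ℤ ℚ)
      rw [← hmap] at this
      omega
    set p := minpoly ℤ β with hpdef
    have haev : (aeval β) p = 0 := minpoly.aeval ℤ β
    have hexp : (aeval β) p = (p.coeff 0 : ℝ) + (p.coeff 1 : ℝ) * β + β^2 := by
      rw [aeval_eq_sum_range, hdeg]
      have hlead : p.coeff 2 = 1 := by
        have := hmonic.leadingCoeff
        rwa [leadingCoeff, hdeg] at this
      rw [Finset.sum_range_succ, Finset.sum_range_succ, Finset.sum_range_succ]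
      simp [hlead]
    refine ⟨-(p.coeff 1), -(p.coeff 0), by push_cast; linarith [hexp ▸ haev], ?_⟩
    intro z hz
    rw [hmap, aeval_map_algebraMap]
    have hexp2 : (aeval z) p = (p.coeff 0 : ℂ) + (p.coeff 1 : ℂ) * z + z^2 := by
      rw [aeval_eq_sum_range, hdeg]
      have hlead : p.coeff 2 = 1 := by
        have := hmonic.leadingCoeff
        rwa [leadingCoeff, hdeg] at this
      rw [Finset.sum_range_succ, Finset.sum_range_succ, Finset.sum_range_succ]
      simp [hlead]
    rw [hexp2, hz]
    have hre : (p.coeff 0 : ℝ) + (p.coeff 1 : ℝ) * β + β^2 = 0 := hexp ▸ haev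
    have hc : ((p.coeff 0 : ℝ) : ℂ) + ((p.coeff 1 : ℝ) : ℂ) * (β:ℂ) + (β:ℂ)^2 = 0 := by
      exact_mod_cast congrArg (fun t : ℝ => (t : ℂ)) hre
    push_cast at hc ⊢
    linear_combination hc
  have hirr : ∀ q : ℚ, β ≠ (q:ℝ) := by
    intro q h
    have h2 : minpoly ℚ β = X - C q := by
      rw [h]
      have h3 : ((q:ℝ)) = algebraMap ℚ ℝ q := rfl
      rw [h3]
      exact minpoly.eq_X_sub_C ℝ q
    rw [h2] at hquad
    simp [natDegree_X_sub_C] at hquad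
  have hzneβ : ((A:ℂ) - (β:ℂ)) ≠ (β:ℂ) := by
    intro h
    have h2 : (A:ℝ) - β = β := by
      have h3 : (((A:ℝ) - β : ℝ) : ℂ) = ((β:ℝ) : ℂ) := by push_cast; exact_mod_cast h
      exact_mod_cast h3
    exact hirr ((A:ℚ)/2) (by push_cast; linarith)
  have habs : |(A:ℝ) - β| < 1 := by
    have h1 := hconj ((A:ℂ) - (β:ℂ)) (hroot _ rfl) hzneβ
    rwa [show ((A:ℂ) - (β:ℂ)) = (((A:ℝ) - β : ℝ) : ℂ) by push_cast; ring,
      Complex.norm_real, Real.norm_eq_abs] at h1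
  have hB0 : B ≠ 0 := by
    intro h
    rw [h] at hq
    push_cast at hq
    have h2 : β * (β - A) = 0 := by nlinarith
    rcases mul_eq_zero.1 h2 with h3 | h3
    · linarith
    · exact hirr ((A:ℚ)) (by push_cast; linarith)
  -- the volume-zero claim
  have hvol : volume (bifSet β) = 0 := by
    rcases hB0.lt_or_gt with hBneg | hBpos
    · -- case B ≤ -1 : windows [0, A - β)
      set w : ℝ := (A:ℝ) - β with hwdef
      have hBR : β * w = ((-B : ℤ) : ℝ) := by
        push_cast
        rw [hwdef]
        nlinarith [hq]
      have hC1 : (1:ℝ) ≤ ((-B : ℤ) : ℝ) := by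
        have : 1 ≤ -B := by omega
        exact_mod_cast this
      have hw0 : 0 < w := by nlinarith
      have hw1 : w < 1 := by
        have := abs_lt.1 habs
        rw [hwdef]
        linarith [this.2]
      obtain ⟨θ, γ, βp, k₀, hθ0, hθ1, hwθ, hγ0, hγβ, hγ1, hγ2, hβp, hk₀⟩ :=
        exists_params β w hβ1 hw0 hw1
      have hzero := survivor_measure_zero β w θ γ βp (fun _ => 0) k₀
        hβ1 hw0 hw1 hθ0 hθ1 hwθ hγ0 hγβ hγ1 hγ2 hβp hk₀
        (fun n _ => le_refl 0) (fun n _ => by simpa using hw1.le)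
      apply measure_mono_null _ hzero
      intro α hα
      obtain ⟨⟨hα0, hα1⟩, hnm⟩ := hα
      intro n hn
      have := (chain_case2 β A (-B) α hβ1 hw0 hw1 hBR hα0 hα1 hnm n hn).2
      simpa using this
    · -- case B ≥ 1 : alternating windows
      set w : ℝ := β - (A:ℝ) with hwdef
      have hBR : β * w = (B : ℝ) := by
        rw [hwdef]
        nlinarith [hq]
      have hC1 : (1:ℝ) ≤ (B : ℝ) := by exact_mod_cast hBpos
      have hw0 : 0 < w := by nlinarith
      have hw1 : w < 1 := by
        have := abs_lt.1 habs
        rw [hwdef]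
        linarith [this.1]
      obtain ⟨θ, γ, βp, k₀, hθ0, hθ1, hwθ, hγ0, hγβ, hγ1, hγ2, hβp, hk₀⟩ :=
        exists_params β w hβ1 hw0 hw1
      set ℓ : ℕ → ℝ := fun n => if n % 2 = 1 then 1 - w else 0 with hℓdef
      have hzero := survivor_measure_zero β w θ γ βp ℓ k₀
        hβ1 hw0 hw1 hθ0 hθ1 hwθ hγ0 hγβ hγ1 hγ2 hβp hk₀
        (fun n _ => by by_cases h : n % 2 = 1 <;> simp [hℓdef, h] <;> linarith)
        (fun n _ => by by_cases h : n % 2 = 1 <;> simp [hℓdef, h] <;> linarith)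
      apply measure_mono_null _ hzero
      intro α hα
      obtain ⟨⟨hα0, hα1⟩, hnm⟩ := hα
      intro n hn
      have h5 := (chain_case1 β A B α hβ1 hw0 hw1 hBR hα0 hα1 hnm n hn).2
      by_cases h : n % 2 = 1
      · simp only [h, if_pos] at h5 ⊢
        simpa [hℓdef, h] using h5
      · simp only [h, if_neg] at h5 ⊢
        simpa [hℓdef, h] using h5
  refine ⟨hvol, ?_⟩
  rw [MeasureTheory.ae_iff]
  have hset : {α : ℝ | ¬(α ∈ Set.Ico (0:ℝ) 1 → HasMatching β α)} = bifSet β := by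
    ext α
    simp only [Set.mem_setOf_eq, bifSet, Classical.not_imp]
  rw [hset]
  exact hvol
end

section
/- Let k and d be positive integers with k > d + 1 and let β be the largest root of x² − kx + d, so that k − 1 < β < k. For α ∈ [0,1): if α < k − β then v_1 − u_1 = β − (k − 1), while if α ≥ k − β then v_1 − u_1 = β − k = −d/β and matching occurs at iterate 2, i.e. u_2 = v_2. -/
open MeasureTheory Finset

theorem first_step_plus_d (k d : ℤ) (hk : 0 < k) (hd : 0 < d) (hkd : k > d + 1)
    (β : ℝ) (hβ : β = (k : ℝ) / 2 + Real.sqrt (((k : ℝ) / 2) ^ 2 - d))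
    (α : ℝ) (hα : α ∈ Set.Ico (0 : ℝ) 1) :
    ((k : ℝ) - 1 < β ∧ β < (k : ℝ)) ∧
    (α < (k : ℝ) - β → vSeq β α 1 - uSeq β α 1 = β - ((k : ℝ) - 1)) ∧
    ((k : ℝ) - β ≤ α →
      vSeq β α 1 - uSeq β α 1 = β - (k : ℝ) ∧ β - (k : ℝ) = -((d : ℝ) / β) ∧
        uSeq β α 2 = vSeq β α 2) := by
  obtain ⟨hα0, hα1⟩ := hα
  have hd1 : (1:ℝ) ≤ (d:ℝ) := by exact_mod_cast hd
  have hdk : (d:ℝ) + 2 ≤ (k:ℝ) := by exact_mod_cast (by omega : d + 2 ≤ k)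
  have hk3 : (3:ℝ) ≤ (k:ℝ) := by linarith
  set s := Real.sqrt (((k : ℝ) / 2) ^ 2 - d) with hs
  have harg : (0:ℝ) ≤ ((k:ℝ)/2)^2 - d := by nlinarith
  have hs0 : 0 ≤ s := Real.sqrt_nonneg _
  have hs2 : s ^ 2 = ((k:ℝ)/2)^2 - d := Real.sq_sqrt harg
  have hβk : β < (k:ℝ) := by
    rw [hβ]; nlinarith
  have hβk1 : (k:ℝ) - 1 < β := by
    rw [hβ]; nlinarith
  have hβpos : 0 < β := by linarith
  have hquad : β ^ 2 = (k:ℝ) * β - d := by rw [hβ]; nlinarith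
  refine ⟨⟨hβk1, hβk⟩, ?_, ?_⟩
  · intro h
    have h1 : Int.fract (β + α) = β + α - ((k:ℝ) - 1) := by
      have : Int.fract (β + α) = Int.fract (β + α - ((k - 1 : ℤ) : ℝ)) :=
        (Int.fract_sub_intCast _ _).symm
      rw [this, Int.fract_eq_self.mpr ⟨by push_cast; linarith, by push_cast; linarith⟩]
      push_cast; ring
    simp only [uSeq, vSeq, Nat.sub_self, orb]
    rw [h1]; ring
  · intro h
    have h1 : Int.fract (β + α) = β + α - (k:ℝ) := by
      have : Int.fract (β + α) = Int.fract (β + α - ((k : ℤ) : ℝ)) :=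
        (Int.fract_sub_intCast _ _).symm
      rw [this, Int.fract_eq_self.mpr ⟨by push_cast; linarith, by push_cast; linarith⟩]
    refine ⟨?_, ?_, ?_⟩
    · simp only [uSeq, vSeq, Nat.sub_self, orb]; rw [h1]; ring
    · field_simp; nlinarith
    · show orb β α α 1 = orb β α (Int.fract (β + α)) 1
      simp only [orb, Tmap, h1]
      have : β * (β + α - (k:ℝ)) + α = β * α + α - ((d : ℤ) : ℝ) := by
        push_cast; nlinarith
      rw [this, Int.fract_sub_intCast]
end

section
/- Let k and d be positive integers with k > d − 1 and let β be the largest root of x² − kx − d, so that k < β < k + 1. For α ∈ [0,1): if α < k + 1 − β then v_1 − u_1 = β − k = d/β and matching occurs at iterate 2, i.e. u_2 = v_2, while if α ≥ k + 1 − β then v_1 − u_1 = β − (k + 1) = d/β − 1. -/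
open MeasureTheory Finset

theorem first_step_minus_d (k d : ℤ) (hk : 0 < k) (hd : 0 < d) (hkd : k > d - 1)
    (β : ℝ) (hβ : β = (k : ℝ) / 2 + Real.sqrt (((k : ℝ) / 2) ^ 2 + d))
    (α : ℝ) (hα : α ∈ Set.Ico (0 : ℝ) 1) :
    ((k : ℝ) < β ∧ β < (k : ℝ) + 1) ∧
    (α < (k : ℝ) + 1 - β →
      vSeq β α 1 - uSeq β α 1 = β - (k : ℝ) ∧ β - (k : ℝ) = (d : ℝ) / β ∧
        uSeq β α 2 = vSeq β α 2) ∧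
    ((k : ℝ) + 1 - β ≤ α →
      vSeq β α 1 - uSeq β α 1 = β - ((k : ℝ) + 1) ∧
        β - ((k : ℝ) + 1) = (d : ℝ) / β - 1) := by
  have hk1 : (1:ℝ) ≤ (k:ℝ) := by exact_mod_cast hk
  have hd1 : (1:ℝ) ≤ (d:ℝ) := by exact_mod_cast hd
  have hdk : (d:ℝ) ≤ (k:ℝ) := by exact_mod_cast (by omega : d ≤ k)
  have hsnn : 0 ≤ Real.sqrt (((k:ℝ)/2)^2 + d) := Real.sqrt_nonneg _
  have hs2 : (Real.sqrt (((k:ℝ)/2)^2 + d))^2 = ((k:ℝ)/2)^2 + d :=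
    Real.sq_sqrt (by positivity)
  have hβk : (k:ℝ) < β := by rw [hβ]; nlinarith [hs2, hsnn]
  have hβk1 : β < (k:ℝ) + 1 := by rw [hβ]; nlinarith [hs2, hsnn]
  have hβpos : 0 < β := by linarith
  have hβ2 : β^2 = k*β + d := by rw [hβ]; nlinarith [hs2]
  obtain ⟨hα0, hα1⟩ := hα
  have hu1 : uSeq β α 1 = α := rfl
  have hdov : β - (k:ℝ) = (d:ℝ)/β := by
    field_simp; nlinarith [hβ2]
  refine ⟨⟨hβk, hβk1⟩, ?_, ?_⟩
  · intro h
    have hfr : Int.fract (β + α) = β + α - k := by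
      have hfloor : ⌊β + α⌋ = k := by
        rw [Int.floor_eq_iff]; constructor <;> push_cast <;> linarith
      rw [Int.fract, hfloor]
    have hv1 : vSeq β α 1 = β + α - k := hfr
    refine ⟨by rw [hv1, hu1]; ring, hdov, ?_⟩
    show Tmap β α α = Tmap β α (Int.fract (β + α))
    unfold Tmap
    rw [hfr, show β * (β + α - k) + α = (d:ℝ) + (β * α + α) by
      linear_combination hβ2]
    rw [show ((d:ℝ)) = ((d:ℤ):ℝ) by norm_num, Int.fract_intCast_add]
  · intro h
    have hfr : Int.fract (β + α) = β + α - (k + 1) := by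
      have hfloor : ⌊β + α⌋ = k + 1 := by
        rw [Int.floor_eq_iff]; constructor <;> push_cast <;> linarith
      rw [Int.fract, hfloor]; push_cast; ring
    have hv1 : vSeq β α 1 = β + α - (k + 1) := hfr
    constructor
    · rw [hv1, hu1]; ring
    · linarith [hdov]
end

section
/- Let k and d be positive integers with k > d + 1, let β be the largest root of x² − kx + d, and set γ = β − (k − 1), so γ ∈ (0,1). Then for every α ∈ [0,1) and every x ∈ [0, 1 − γ), the difference T_{α,β}(x + γ) − T_{α,β}(x) equals either γ or −d/β. -/
open MeasureTheory Finset

theorem translation_step_plus_d (k d : ℤ) (hk : 0 < k) (hd : 0 < d) (hkd : k > d + 1)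
    (β : ℝ) (hβ : β = (k : ℝ) / 2 + Real.sqrt (((k : ℝ) / 2) ^ 2 - d))
    (γ : ℝ) (hγ : γ = β - ((k : ℝ) - 1)) :
    γ ∈ Set.Ioo (0 : ℝ) 1 ∧
    ∀ α ∈ Set.Ico (0 : ℝ) 1, ∀ x ∈ Set.Ico (0 : ℝ) (1 - γ),
      Tmap β α (x + γ) - Tmap β α x = γ ∨
        Tmap β α (x + γ) - Tmap β α x = -((d : ℝ) / β) := by

  have hkR : (3:ℝ) ≤ (k:ℝ) := by exact_mod_cast (by omega : (3:ℤ) ≤ k)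
  have hdR : (0:ℝ) < (d:ℝ) := by exact_mod_cast hd
  have hdk : (d:ℝ) + 1 < (k:ℝ) := by exact_mod_cast hkd
  have harg : 0 ≤ ((k:ℝ)/2)^2 - d := by nlinarith
  set s := Real.sqrt (((k:ℝ)/2)^2 - d) with hsdef
  have hs2 : s^2 = ((k:ℝ)/2)^2 - d := Real.sq_sqrt harg
  have hs0 : 0 ≤ s := Real.sqrt_nonneg _
  have hβquad : β^2 = k*β - d := by rw [hβ]; nlinarith [hs2]
  have hβgt : (k:ℝ) - 1 < β := by rw [hβ]; nlinarith [hs2, hs0]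
  have hβlt : β < k := by rw [hβ]; nlinarith [hs2, hs0]
  have hβpos : 0 < β := by linarith
  have hγ0 : 0 < γ := by rw [hγ]; linarith
  have hγ1 : γ < 1 := by rw [hγ]; linarith
  refine ⟨⟨hγ0, hγ1⟩, ?_⟩
  intro α hα x hx
  have hβγ : β * (x + γ) + α = (β * x + α + γ) + ((k - 1 - d : ℤ) : ℝ) := by
    push_cast; rw [hγ]; nlinarith [hβquad]
  have key : Tmap β α (x + γ) = Int.fract (β * x + α + γ) := by
    unfold Tmap
    rw [hβγ, Int.fract_add_intCast]
  set y := β * x + α with hy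
  have hTx : Tmap β α x = Int.fract y := rfl
  have hfy0 : 0 ≤ Int.fract y := Int.fract_nonneg y
  have hfy1 : Int.fract y < 1 := Int.fract_lt_one y
  have hyg : Int.fract (y + γ) = Int.fract (Int.fract y + γ) := by
    rw [show y + γ = (Int.fract y + γ) + (⌊y⌋ : ℝ) by rw [Int.fract]; ring,
        Int.fract_add_intCast]
  rw [key, hTx, hyg]
  by_cases hcase : Int.fract y + γ < 1
  · left
    rw [Int.fract_eq_self.mpr ⟨by positivity, hcase⟩]
    ring
  · right
    push_neg at hcase
    have hb0 : (0:ℝ) ≤ Int.fract y + γ - 1 := by linarith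
    have hb1 : Int.fract y + γ - 1 < 1 := by linarith
    have h1 : Int.fract (Int.fract y + γ) = Int.fract y + γ - 1 := by
      have e : Int.fract y + γ = (Int.fract y + γ - 1) + ((1:ℤ):ℝ) := by push_cast; ring
      conv_lhs => rw [e]
      rw [Int.fract_add_intCast, Int.fract_eq_self.mpr ⟨hb0, hb1⟩]
    rw [h1]
    have : γ - 1 = -((d:ℝ)/β) := by
      rw [hγ]
      field_simp
      nlinarith [hβquad]
    linarith
end

section
/- Let k and d be positive integers with k > d − 1, let β be the largest root of x² − kx − d, and set γ = (k + 1) − β, so γ ∈ (0,1). Then for every α ∈ [0,1) and every x ∈ [0, 1 − γ), the difference T_{α,β}(x + γ) − T_{α,β}(x) equals either d/β or −γ. -/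
open MeasureTheory Finset

lemma fract_add_cases (y t : ℝ) (ht0 : 0 ≤ t) (ht1 : t < 1) :
    Int.fract (y + t) = Int.fract y + t ∨ Int.fract (y + t) = Int.fract y + t - 1 := by
  have h0 := Int.fract_nonneg y
  have h1 := Int.fract_lt_one y
  have key : Int.fract (y + t) = Int.fract (Int.fract y + t) := by
    conv_lhs => rw [← Int.floor_add_fract y]
    rw [add_assoc, Int.fract_intCast_add]
  by_cases hc : Int.fract y + t < 1
  · left; rw [key, Int.fract_eq_self.mpr ⟨by linarith, hc⟩]
  · right
    rw [key]
    have h2 : Int.fract (Int.fract y + t) = Int.fract (Int.fract y + t - 1) := by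
      conv_lhs => rw [show Int.fract y + t = (Int.fract y + t - 1) + ((1:ℤ):ℝ) by push_cast; ring]
      rw [Int.fract_add_intCast]
    rw [h2, Int.fract_eq_self.mpr ⟨by linarith, by linarith⟩]

theorem translation_step_minus_d (k d : ℤ) (hk : 0 < k) (hd : 0 < d) (hkd : k > d - 1)
    (β : ℝ) (hβ : β = (k : ℝ) / 2 + Real.sqrt (((k : ℝ) / 2) ^ 2 + d))
    (γ : ℝ) (hγ : γ = ((k : ℝ) + 1) - β) :
    γ ∈ Set.Ioo (0 : ℝ) 1 ∧
    ∀ α ∈ Set.Ico (0 : ℝ) 1, ∀ x ∈ Set.Ico (0 : ℝ) (1 - γ),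
      Tmap β α (x + γ) - Tmap β α x = (d : ℝ) / β ∨
        Tmap β α (x + γ) - Tmap β α x = -γ := by
  have hdk : (d : ℝ) ≤ (k : ℝ) := by exact_mod_cast (by omega : d ≤ k)
  have hd' : (0 : ℝ) < (d : ℝ) := by exact_mod_cast hd
  have hk' : (1 : ℝ) ≤ (k : ℝ) := by exact_mod_cast hk
  set s := Real.sqrt (((k : ℝ) / 2) ^ 2 + d) with hs
  have hs0 : 0 ≤ s := Real.sqrt_nonneg _
  have hs2 : s ^ 2 = ((k : ℝ) / 2) ^ 2 + d := Real.sq_sqrt (by nlinarith)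
  have hβk : (k : ℝ) < β := by rw [hβ]; nlinarith
  have hβk1 : β < (k : ℝ) + 1 := by rw [hβ]; nlinarith
  have hβpos : 0 < β := by linarith
  have hβsq : β ^ 2 = (k : ℝ) * β + d := by rw [hβ]; ring_nf; nlinarith
  have hdβ : (d : ℝ) / β = β - k := by
    field_simp
    nlinarith
  have hβγ : β * γ = β - d := by rw [hγ]; nlinarith
  have hγ0 : 0 < γ := by rw [hγ]; linarith
  have hγ1 : γ < 1 := by rw [hγ]; linarith
  refine ⟨⟨hγ0, hγ1⟩, ?_⟩
  intro α hα x hx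
  set t : ℝ := β - k with hT
  have ht0 : 0 ≤ t := by simp [hT]; linarith
  have ht1 : t < 1 := by simp [hT]; linarith
  have hkey : Tmap β α (x + γ) = Int.fract ((β * x + α) + t) := by
    unfold Tmap
    have : β * (x + γ) + α = ((β * x + α) + t) + ((k - d : ℤ) : ℝ) := by
      push_cast
      rw [mul_add, hβγ]
      ring
    rw [this, Int.fract_add_intCast]
  have hγt : -γ = t - 1 := by rw [hγ]; simp [hT]; ring
  rcases fract_add_cases (β * x + α) t ht0 ht1 with h | h
  · left
    rw [hdβ, hkey, h]
    unfold Tmap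
    ring
  · right
    rw [hγt, hkey, h]
    unfold Tmap
    ring
end

section
/- Let k ≥ 2 and let β be the multinacci number of degree k, i.e. the real root in (1,2) of x^k = x^{k−1} + x^{k−2} + ⋯ + x + 1. If α ∈ [0, 1/β^k), then T_{α,β} has matching after k steps: u_k = v_k. -/
open MeasureTheory Finset

/-- Partial geometric sum `1 + β + ⋯ + β^{n-1}`. -/
noncomputable def geomS (β : ℝ) (n : ℕ) : ℝ := ∑ i ∈ Finset.range n, β ^ i

lemma geomS_one (β : ℝ) : geomS β 1 = 1 := by simp [geomS]

lemma geomS_succ (β : ℝ) (n : ℕ) : geomS β (n + 1) = β * geomS β n + 1 := by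
  simpa [geomS] using geom_sum_succ (x := β) (n := n)

lemma geomS_succ' (β : ℝ) (n : ℕ) : geomS β (n + 1) = geomS β n + β ^ n := by
  simp [geomS, Finset.sum_range_succ]

lemma geomS_mul (β : ℝ) (n : ℕ) : (β - 1) * geomS β n = β ^ n - 1 := by
  have := geom_sum_mul β n
  simp only [geomS]
  linarith

lemma geomS_mono {β : ℝ} (hβ : 0 ≤ β) {m n : ℕ} (h : m ≤ n) :
    geomS β m ≤ geomS β n := by
  apply Finset.sum_le_sum_of_subset_of_nonneg (Finset.range_subset_range.mpr h)
  intro i _ _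
  positivity

lemma geomS_one_le {β : ℝ} (hβ : 0 ≤ β) {n : ℕ} (h : 1 ≤ n) : 1 ≤ geomS β n := by
  have := geomS_mono hβ h
  rwa [geomS_one] at this

lemma geomS_nonneg {β : ℝ} (hβ : 0 ≤ β) (n : ℕ) : 0 ≤ geomS β n := by
  have : geomS β 0 = 0 := by simp [geomS]
  linarith [geomS_mono hβ (Nat.zero_le n)]

theorem multinacci_two_branches_matching (k : ℕ) (hk : 2 ≤ k) (β : ℝ)
    (hβ1 : 1 < β) (hβ2 : β < 2) (hroot : β ^ k = ∑ i ∈ Finset.range k, β ^ i)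
    (α : ℝ) (hα : α ∈ Set.Ico (0 : ℝ) (1 / β ^ k)) :
    uSeq β α k = vSeq β α k := by
  obtain ⟨hα0, hα1⟩ := hα
  have hβ0 : (0 : ℝ) < β := by linarith
  have hβ0' : (0 : ℝ) ≤ β := le_of_lt hβ0
  have hrootS : β ^ k = geomS β k := hroot
  have hpk : (0 : ℝ) < β ^ k := pow_pos hβ0 k
  -- β^{k+1} = 2β^k - 1
  have hrec : β ^ (k + 1) = 2 * β ^ k - 1 := by
    have h1 : geomS β (k + 1) = β * geomS β k + 1 := geomS_succ β k
    have h2 : geomS β (k + 1) = geomS β k + β ^ k := geomS_succ' β k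
    have : β ^ (k + 1) = β * β ^ k := by ring
    rw [this, hrootS]
    linarith
  have hkey : β ^ k * (2 - β) = 1 := by
    have : β ^ (k + 1) = β ^ k * β := by ring
    linarith [hrec.symm.trans rfl, this ▸ hrec]
  -- α < 2 - β and α * β^k < 1
  have hαβk : α * β ^ k < 1 := by
    rw [lt_div_iff₀ hpk] at hα1
    exact hα1
  have hα2 : α < 2 - β := by
    nlinarith [hαβk, hpk]
  -- d_n = β^n - S n ≥ 0 for n ≤ k
  have hdnn : ∀ n : ℕ, n ≤ k → 0 ≤ β ^ n - geomS β n := by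
    intro n hn
    have hple : β ^ n ≤ β ^ k := pow_le_pow_right₀ (le_of_lt hβ1) hn
    have hmul := geomS_mul β n
    nlinarith [mul_nonneg (by linarith : (0:ℝ) ≤ 2 - β) (by linarith : (0:ℝ) ≤ β ^ k - β ^ n)]
  -- v_n < 1 for 1 ≤ n ≤ k
  have hvlt1 : ∀ n : ℕ, 1 ≤ n → n ≤ k →
      α * geomS β n + β ^ n - geomS β n < 1 := by
    intro n h1n hnk
    have hS1 : 1 ≤ geomS β n := geomS_one_le hβ0' h1n
    have hmul := geomS_mul β n
    nlinarith [mul_pos (by linarith : (0:ℝ) < 2 - β - α) (by linarith : (0:ℝ) < geomS β n)]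
  -- u_n < 1 for n ≤ k
  have hult1 : ∀ n : ℕ, n ≤ k → α * geomS β n < 1 := by
    intro n hnk
    have hSle : geomS β n ≤ geomS β k := geomS_mono hβ0' hnk
    nlinarith [mul_nonneg hα0 (by linarith : (0:ℝ) ≤ geomS β k - geomS β n)]
  have hunn : ∀ n : ℕ, 0 ≤ α * geomS β n := fun n =>
    mul_nonneg hα0 (geomS_nonneg hβ0' n)
  -- the main induction
  have main : ∀ m : ℕ, m + 1 ≤ k →
      orb β α α m = α * geomS β (m + 1) ∧
      orb β α (Int.fract (β + α)) m
        = α * geomS β (m + 1) + β ^ (m + 1) - geomS β (m + 1) := by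
    intro m
    induction m with
    | zero =>
      intro _
      constructor
      · simp [orb, geomS_one]
      · have h1 : Int.fract (β + α) = β + α - 1 := by
          have h := Int.fract_add_one (β + α - 1)
          rw [show β + α - 1 + 1 = β + α by ring] at h
          rw [h, Int.fract_eq_self]
          constructor <;> linarith
        simp only [orb, h1, zero_add, geomS_one]
        ring
    | succ m ih =>
      intro hm
      have hm' : m + 1 ≤ k := by omega
      obtain ⟨hu, hv⟩ := ih hm'
      constructor
      · show Tmap β α (orb β α α m) = _
        rw [hu]
        unfold Tmap
        have harg : β * (α * geomS β (m + 1)) + α = α * geomS β (m + 2) := by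
          have := geomS_succ β (m + 1)
          nlinarith [this]
        rw [harg, Int.fract_eq_self.mpr ⟨hunn _, hult1 _ hm⟩]
      · show Tmap β α (orb β α (Int.fract (β + α)) m) = _
        rw [hv]
        unfold Tmap
        have hSrec : geomS β (m + 2) = β * geomS β (m + 1) + 1 := geomS_succ β (m + 1)
        have harg : β * (α * geomS β (m + 1) + β ^ (m + 1) - geomS β (m + 1)) + α
            = (α * geomS β (m + 2) + β ^ (m + 2) - geomS β (m + 2)) + 1 := by
          have hp : β ^ (m + 2) = β * β ^ (m + 1) := by ring
          rw [hp, hSrec]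
          ring
        rw [harg, Int.fract_add_one, Int.fract_eq_self.mpr ⟨?_, ?_⟩]
        · have := hdnn (m + 2) hm
          have := hunn (m + 2)
          linarith
        · exact hvlt1 (m + 2) (by omega) hm
  -- conclude
  have hk1 : k - 1 + 1 = k := by omega
  obtain ⟨hu, hv⟩ := main (k - 1) (by omega)
  rw [hk1] at hu hv
  unfold uSeq vSeq
  rw [hu, hv, hrootS]
  ring
end

section
/- Let k ≥ 2, let β be the multinacci number of degree k (the real root in (1,2) of x^k = x^{k−1} + ⋯ + x + 1), and let α ∈ [0, 1/β^k). Then for every j with 1 ≤ j ≤ k − 1 one has u_j = (β^{j−1} + β^{j−2} + ⋯ + β + 1)α and v_j = u_j + 1/β + 1/β² + ⋯ + 1/β^{k−j}. -/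
open MeasureTheory Finset

theorem multinacci_two_branches_orbits (k : ℕ) (hk : 2 ≤ k) (β : ℝ)
    (hβ1 : 1 < β) (hβ2 : β < 2) (hroot : β ^ k = ∑ i ∈ Finset.range k, β ^ i)
    (α : ℝ) (hα : α ∈ Set.Ico (0 : ℝ) (1 / β ^ k)) :
    ∀ j : ℕ, 1 ≤ j → j ≤ k - 1 →
      uSeq β α j = (∑ i ∈ Finset.range j, β ^ i) * α ∧
      vSeq β α j = uSeq β α j + ∑ i ∈ Finset.range (k - j), 1 / β ^ (i + 1) := by
  obtain ⟨hα0, hα1⟩ := hα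
  have hβ0 : (0:ℝ) < β := by linarith
  have hβk : (0:ℝ) < β ^ k := pow_pos hβ0 k
  have hαβk : α * β ^ k < 1 := (lt_div_iff₀ hβk).mp hα1
  -- nonnegativity of geometric sums
  have Snn : ∀ m : ℕ, (0:ℝ) ≤ ∑ i ∈ range m, β ^ i := fun m =>
    Finset.sum_nonneg fun i _ => (pow_pos hβ0 i).le
  have Spos : ∀ m : ℕ, 1 ≤ m → (0:ℝ) < ∑ i ∈ range m, β ^ i := by
    intro m hm
    have : (0:ℝ) < β ^ 0 := pow_pos hβ0 0
    exact Finset.sum_pos' (fun i _ => (pow_pos hβ0 i).le)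
      ⟨0, Finset.mem_range.mpr (by omega), this⟩
  have Smono : ∀ m n : ℕ, m ≤ n →
      (∑ i ∈ range m, β ^ i) ≤ ∑ i ∈ range n, β ^ i := by
    intro m n hmn
    exact Finset.sum_le_sum_of_subset_of_nonneg
      (Finset.range_subset_range.mpr hmn) (fun i _ _ => (pow_pos hβ0 i).le)
  have Dnn : ∀ m : ℕ, (0:ℝ) ≤ ∑ i ∈ range m, 1 / β ^ (i + 1) := fun m =>
    Finset.sum_nonneg fun i _ => by positivity
  -- key geometric identity
  have hgeo : ∀ m : ℕ, m ≤ k →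
      (∑ i ∈ range m, 1 / β ^ (i + 1)) * β ^ k
        = β ^ k - ∑ i ∈ range (k - m), β ^ i := by
    intro m hm
    induction m with
    | zero => simp [hroot]
    | succ m ih =>
      have hm' : m ≤ k := by omega
      have ihm := ih hm'
      have hidx : k - m = (k - (m + 1)) + 1 := by omega
      have h1 : 1 / β ^ (m + 1) * β ^ k = β ^ (k - (m + 1)) := by
        have hp : β ^ k = β ^ (m + 1) * β ^ (k - (m + 1)) := by
          rw [← pow_add]
          congr 1
          omega
        rw [hp]
        field_simp
      rw [Finset.sum_range_succ, add_mul, ihm, h1, hidx, Finset.sum_range_succ]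
      ring
  -- β * D m = 1 + D (m-1) for m ≥ 1
  have hDstep : ∀ m : ℕ, 1 ≤ m →
      β * ∑ i ∈ range m, 1 / β ^ (i + 1)
        = 1 + ∑ i ∈ range (m - 1), 1 / β ^ (i + 1) := by
    intro m hm
    obtain ⟨m', rfl⟩ : ∃ m', m = m' + 1 := ⟨m - 1, by omega⟩
    rw [Finset.sum_range_succ' (fun i => 1 / β ^ (i + 1)) m']
    have hterm : ∀ i : ℕ, β * (1 / β ^ (i + 1 + 1)) = 1 / β ^ (i + 1) := by
      intro i
      have h1 : β ^ (i + 1 + 1) = β ^ (i + 1) * β := by ring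
      rw [h1]
      field_simp
    rw [mul_add, Finset.mul_sum]
    simp only [hterm]
    have : β * (1 / β ^ (0 + 1)) = 1 := by
      field_simp
      simp
    rw [this]
    simp [add_comm]
  -- fract step for u
  have hufract : ∀ m : ℕ, m ≤ k → Int.fract ((∑ i ∈ range m, β ^ i) * α)
      = (∑ i ∈ range m, β ^ i) * α := by
    intro m hm
    apply Int.fract_eq_self.mpr
    constructor
    · exact mul_nonneg (Snn m) hα0
    · calc (∑ i ∈ range m, β ^ i) * α ≤ (∑ i ∈ range k, β ^ i) * α :=
            mul_le_mul_of_nonneg_right (Smono m k hm) hα0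
        _ = α * β ^ k := by rw [← hroot]; ring
        _ < 1 := hαβk
  intro j hj1
  induction j, hj1 using Nat.le_induction with
  | base =>
    intro hj2
    have hu1 : uSeq β α 1 = α := by simp [uSeq, orb]
    have huform : uSeq β α 1 = (∑ i ∈ range 1, β ^ i) * α := by
      simp [hu1]
    refine ⟨huform, ?_⟩
    -- v₁ = fract (β + α)
    have hDk1 : (∑ i ∈ range (k - 1), 1 / β ^ (i + 1)) = β - 1 := by
      have h := hgeo (k - 1) (by omega)
      have hk1 : k - (k - 1) = 1 := by omega
      rw [hk1] at h
      simp only [Finset.sum_range_one, pow_zero] at h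
      have hβk1 : β * β ^ k = 2 * β ^ k - 1 := by
        calc β * β ^ k = β * ∑ i ∈ range k, β ^ i := by rw [hroot]
          _ = ∑ i ∈ range k, β ^ (i + 1) := by
              rw [Finset.mul_sum]; exact Finset.sum_congr rfl fun i _ => by ring
          _ = (∑ i ∈ range (k + 1), β ^ i) - 1 := by
              rw [Finset.sum_range_succ' (fun i => β ^ i) k]; simp
          _ = 2 * β ^ k - 1 := by
              rw [Finset.sum_range_succ, ← hroot]; ring
      have h2 : (β - 1) * β ^ k = β ^ k - 1 := by
        rw [sub_mul, hβk1]; ring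
      have := h.trans h2.symm
      exact mul_right_cancel₀ hβk.ne' this
    have hlt : α + (β - 1) < 1 := by
      have h1 : (2 - β) * β ^ k = 1 := by
        have hβk1 : β * β ^ k = 2 * β ^ k - 1 := by
          calc β * β ^ k = β * ∑ i ∈ range k, β ^ i := by rw [hroot]
            _ = ∑ i ∈ range k, β ^ (i + 1) := by
                rw [Finset.mul_sum]; exact Finset.sum_congr rfl fun i _ => by ring
            _ = (∑ i ∈ range (k + 1), β ^ i) - 1 := by
                rw [Finset.sum_range_succ' (fun i => β ^ i) k]; simp
            _ = 2 * β ^ k - 1 := by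
                rw [Finset.sum_range_succ, ← hroot]; ring
        rw [sub_mul, hβk1]; ring
      nlinarith [hαβk, hβk]
    have hfr : Int.fract (β + α) = α + (β - 1) := by
      have heq : β + α = (α + (β - 1)) + 1 := by ring
      rw [heq, Int.fract_add_one]
      exact Int.fract_eq_self.mpr ⟨by linarith, hlt⟩
    have hv1 : vSeq β α 1 = Int.fract (β + α) := by simp [vSeq, orb]
    rw [hv1, hfr, hu1, hDk1]
  | succ n hn ih =>
    intro hj2
    have hnk : n ≤ k - 1 := by omega
    obtain ⟨ihu, ihv⟩ := ih hnk
    have hu : uSeq β α (n + 1) = Tmap β α (uSeq β α n) := by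
      show orb β α α (n + 1 - 1) = Tmap β α (orb β α α (n - 1))
      have h : n + 1 - 1 = (n - 1) + 1 := by omega
      rw [h]
      rfl
    have hv : vSeq β α (n + 1) = Tmap β α (vSeq β α n) := by
      show orb β α _ (n + 1 - 1) = Tmap β α (orb β α _ (n - 1))
      have h : n + 1 - 1 = (n - 1) + 1 := by omega
      rw [h]
      rfl
    have hS : β * ((∑ i ∈ range n, β ^ i) * α) + α
        = (∑ i ∈ range (n + 1), β ^ i) * α := by
      rw [geom_sum_succ]
      ring
    have huform : uSeq β α (n + 1) = (∑ i ∈ range (n + 1), β ^ i) * α := by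
      rw [hu, Tmap, ihu, hS, hufract (n + 1) (by omega)]
    refine ⟨huform, ?_⟩
    have hβD : β * ∑ i ∈ range (k - n), 1 / β ^ (i + 1)
        = 1 + ∑ i ∈ range (k - (n + 1)), 1 / β ^ (i + 1) := by
      have h := hDstep (k - n) (by omega)
      have h2 : k - n - 1 = k - (n + 1) := by omega
      rw [h2] at h
      exact h
    have hx : β * vSeq β α n + α
        = ((∑ i ∈ range (n + 1), β ^ i) * α
            + ∑ i ∈ range (k - (n + 1)), 1 / β ^ (i + 1)) + 1 := by
      rw [ihv, ihu, mul_add, hβD]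
      rw [← hS]
      ring
    have hxlt : (∑ i ∈ range (n + 1), β ^ i) * α
        + (∑ i ∈ range (k - (n + 1)), 1 / β ^ (i + 1)) < 1 := by
      have hD := hgeo (k - (n + 1)) (by omega)
      have h2 : k - (k - (n + 1)) = n + 1 := by omega
      rw [h2] at hD
      have hSp := Spos (n + 1) (by omega)
      have hmul : ((∑ i ∈ range (n + 1), β ^ i) * α
          + ∑ i ∈ range (k - (n + 1)), 1 / β ^ (i + 1)) * β ^ k < 1 * β ^ k := by
        rw [add_mul, hD]
        nlinarith [hαβk, hSp]
      exact lt_of_mul_lt_mul_right hmul hβk.le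
    have hxnn : (0:ℝ) ≤ (∑ i ∈ range (n + 1), β ^ i) * α
        + ∑ i ∈ range (k - (n + 1)), 1 / β ^ (i + 1) :=
      add_nonneg (mul_nonneg (Snn _) hα0) (Dnn _)
    rw [hv, Tmap, hx, Int.fract_add_one, Int.fract_eq_self.mpr ⟨hxnn, hxlt⟩, huform]
end

section
/- Let k ≥ 2, let β be the multinacci number of degree k (the real root in (1,2) of x^k = x^{k−1} + ⋯ + x + 1), and let α ∈ (1/β^k, 1). Then for every j ≥ 1 the difference of the critical orbits satisfies |u_j − v_j| ∈ { e_1/β + e_2/β² + ⋯ + e_k/β^k : e_1, …, e_k ∈ {0,1} }. -/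
open MeasureTheory Finset

private lemma geom_id (k : ℕ) (β : ℝ) (hβ : 0 < β)
    (hroot : β ^ k = ∑ i ∈ range k, β ^ i) :
    ∑ i ∈ range k, (1:ℝ) / β ^ (i+1) = 1 := by
  have h1 : ∀ i ∈ range k, (1:ℝ)/β^(i+1) = β^(k-1-i)/β^k := by
    intro i hi
    rw [mem_range] at hi
    rw [div_eq_div_iff (by positivity) (by positivity), one_mul, ← pow_add]
    congr 1; omega
  rw [Finset.sum_congr rfl h1, ← Finset.sum_div,
    Finset.sum_range_reflect (fun i => β ^ i) k, ← hroot, div_self (by positivity)]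

private lemma int_cases (r D : ℝ) (hr0 : 0 ≤ r) (hr1 : r < 1) (hD : |D| < 1)
    (h : ∃ n : ℤ, D = r + n ∨ D = -r + n) : |D| = r ∨ |D| = 1 - r := by
  obtain ⟨n, h | h⟩ := h
  · rw [abs_lt] at hD
    have h1 : (n:ℝ) < 1 := by linarith
    have h2 : (-2:ℝ) < n := by linarith
    have hn : n = 0 ∨ n = -1 := by
      have h1' : n < 1 := by exact_mod_cast h1
      have h2' : -2 < n := by exact_mod_cast h2
      omega
    rcases hn with rfl | rfl
    · left; rw [h]; push_cast; rw [add_zero, abs_of_nonneg hr0]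
    · right; rw [h]; push_cast; rw [abs_of_nonpos (by linarith)]; ring
  · rw [abs_lt] at hD
    have h1 : (n:ℝ) < 2 := by linarith
    have h2 : (-1:ℝ) < n := by linarith
    have hn : n = 0 ∨ n = 1 := by
      have h1' : n < 2 := by exact_mod_cast h1
      have h2' : -1 < n := by exact_mod_cast h2
      omega
    rcases hn with rfl | rfl
    · left; rw [h]; push_cast; rw [add_zero, abs_of_nonpos (by linarith), neg_neg]
    · right; rw [h]; push_cast; rw [abs_of_nonneg (by linarith)]; ring

private lemma step_repr (k : ℕ) (hk : 2 ≤ k) (β : ℝ) (hβ1 : 1 < β)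
    (hroot : β ^ k = ∑ i ∈ range k, β ^ i)
    (e : ℕ → ℕ) (he : ∀ i, e i ≤ 1) (D : ℝ) (hD : |D| < 1)
    (h : ∃ n : ℤ, D = (∑ i ∈ range (k-1), (e (i+2) : ℝ) / β ^ (i+1)) + n ∨
          D = -(∑ i ∈ range (k-1), (e (i+2) : ℝ) / β ^ (i+1)) + n) :
    ∃ e' : ℕ → ℕ, (∀ i, e' i ≤ 1) ∧
      |D| = ∑ i ∈ range k, (e' (i+1) : ℝ) / β ^ (i+1) := by
  obtain ⟨m, rfl⟩ : ∃ m, k = m + 1 := ⟨k - 1, by omega⟩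
  have hβ0 : 0 < β := by linarith
  have hid := geom_id (m+1) β hβ0 hroot
  simp only [Nat.add_sub_cancel] at h
  set r : ℝ := ∑ i ∈ range m, (e (i+2) : ℝ) / β ^ (i+1) with hr
  have hsum_m : ∑ i ∈ range m, (1:ℝ)/β^(i+1) = 1 - 1/β^(m+1) := by
    have hs := Finset.sum_range_succ (fun i => (1:ℝ)/β^(i+1)) m
    rw [hid] at hs
    linarith
  have hrle : r ≤ ∑ i ∈ range m, (1:ℝ) / β ^ (i+1) := by
    apply Finset.sum_le_sum
    intro i _
    gcongr
    exact_mod_cast he (i+2)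
  have hr0 : 0 ≤ r := Finset.sum_nonneg (by intro i _; positivity)
  have hr1 : r < 1 := by
    have hp : (0:ℝ) < 1/β^(m+1) := by positivity
    linarith
  rcases int_cases r D hr0 hr1 hD h with hcase | hcase
  · refine ⟨fun i => if i = m + 1 then 0 else e (i+1), ?_, ?_⟩
    · intro i; by_cases hi : i = m + 1 <;> simp [hi, he]
    · rw [hcase, Finset.sum_range_succ]
      have hterm : ∀ i ∈ range m,
          (((if i + 1 = m + 1 then 0 else e (i+2) : ℕ)) : ℝ)/β^(i+1)
            = (e (i+2):ℝ)/β^(i+1) := by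
        intro i hi; rw [mem_range] at hi; rw [if_neg (by omega)]
      rw [Finset.sum_congr rfl hterm]
      norm_num [hr]
  · refine ⟨fun i => if i = m + 1 then 1 else 1 - e (i+1), ?_, ?_⟩
    · intro i; by_cases hi : i = m + 1 <;> simp [hi]
    · rw [hcase, Finset.sum_range_succ]
      have hterm : ∀ i ∈ range m,
          (((if i + 1 = m + 1 then 1 else 1 - e (i+2) : ℕ)) : ℝ)/β^(i+1)
            = (1 - (e (i+2):ℝ))/β^(i+1) := by
        intro i hi; rw [mem_range] at hi
        rw [if_neg (by omega), Nat.cast_sub (he (i+2)), Nat.cast_one]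
      rw [Finset.sum_congr rfl hterm]
      have hsub : ∑ i ∈ range m, (1 - (e (i+2):ℝ))/β^(i+1)
          = (∑ i ∈ range m, (1:ℝ)/β^(i+1)) - r := by
        rw [hr, ← Finset.sum_sub_distrib]
        apply Finset.sum_congr rfl
        intro i _; ring
      rw [hsub, hsum_m]
      simp only [show (fun i => if i = m + 1 then 1 else 1 - e (i+1)) (m+1) = 1 from by simp]
      push_cast
      ring

theorem multinacci_difference_codes (k : ℕ) (hk : 2 ≤ k) (β : ℝ)
    (hβ1 : 1 < β) (hβ2 : β < 2) (hroot : β ^ k = ∑ i ∈ Finset.range k, β ^ i)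
    (α : ℝ) (hα : α ∈ Set.Ioo (1 / β ^ k) 1) :
    ∀ j : ℕ, 1 ≤ j → ∃ e : ℕ → ℕ, (∀ i, e i ≤ 1) ∧
      |uSeq β α j - vSeq β α j| = ∑ i ∈ Finset.range k, (e (i + 1) : ℝ) / β ^ (i + 1) := by
  obtain ⟨hα1, hα2⟩ := hα
  have hβ0 : 0 < β := by linarith
  have hkp : (0:ℝ) < 1 / β ^ k := by positivity
  have hα0 : 0 < α := lt_trans hkp hα1
  have hid := geom_id k β hβ0 hroot
  have hg := geom_sum_mul β k
  rw [← hroot] at hg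
  -- β = 1 + ∑_{i < k-1} 1/β^{i+1}
  have hβeq : β = 1 + ∑ i ∈ range (k-1), (1:ℝ)/β^(i+1) := by
    obtain ⟨m, rfl⟩ : ∃ m, k = m + 1 := ⟨k - 1, by omega⟩
    have hs := Finset.sum_range_succ (fun i => (1:ℝ)/β^(i+1)) m
    rw [hid] at hs
    simp only [Nat.add_sub_cancel]
    have hpow : (0:ℝ) < β ^ (m+1) := by positivity
    have h2 : β = 2 - 1/β^(m+1) := by
      field_simp
      nlinarith [hg]
    linarith
  have main : ∀ n : ℕ, ∃ e : ℕ → ℕ, (∀ i, e i ≤ 1) ∧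
      |orb β α α n - orb β α (Int.fract (β + α)) n| =
        ∑ i ∈ range k, (e (i+1) : ℝ) / β ^ (i+1) := by
    intro n
    induction n with
    | zero =>
      simp only [orb]
      refine step_repr k hk β hβ1 hroot (fun _ => 1) (fun _ => le_refl 1) _ ?_ ?_
      · rw [abs_lt]
        have h1 := Int.fract_nonneg (β + α)
        have h2 := Int.fract_lt_one (β + α)
        constructor <;> linarith
      · refine ⟨⌊β + α⌋ - 1, Or.inr ?_⟩
        rw [Int.fract]
        push_cast
        linarith [hβeq]
    | succ n ih =>
      obtain ⟨e, he, hind⟩ := ih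
      simp only [orb, Tmap]
      set U := orb β α α n with hU
      set V := orb β α (Int.fract (β + α)) n with hV
      have hS0 : (0:ℝ) ≤ ∑ i ∈ range k, (e (i+1) : ℝ) / β ^ (i+1) :=
        Finset.sum_nonneg (by intro i _; positivity)
      have hUV := (abs_eq hS0).mp hind
      have hmul : β * (∑ i ∈ range k, (e (i+1):ℝ)/β^(i+1)) =
          (e 1 : ℝ) + ∑ i ∈ range (k-1), (e (i+2):ℝ)/β^(i+1) := by
        rw [Finset.mul_sum]
        have h1 : ∀ i ∈ range k, β * ((e (i+1):ℝ)/β^(i+1)) = (e (i+1):ℝ)/β^i := by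
          intro i _
          rw [pow_succ]
          have : β ^ i ≠ 0 := by positivity
          field_simp
        rw [Finset.sum_congr rfl h1]
        obtain ⟨m, rfl⟩ : ∃ m, k = m + 1 := ⟨k - 1, by omega⟩
        rw [Finset.sum_range_succ']
        simp only [Nat.add_sub_cancel, pow_zero, div_one]
        ring
      refine step_repr k hk β hβ1 hroot e he _ ?_ ?_
      · rw [abs_lt]
        have h1 := Int.fract_nonneg (β * U + α)
        have h2 := Int.fract_lt_one (β * U + α)
        have h3 := Int.fract_nonneg (β * V + α)
        have h4 := Int.fract_lt_one (β * V + α)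
        constructor <;> linarith
      · rcases hUV with hE | hE
        · refine ⟨(e 1 : ℤ) + ⌊β * V + α⌋ - ⌊β * U + α⌋, Or.inl ?_⟩
          rw [Int.fract, Int.fract]
          push_cast
          linear_combination β * hE + hmul
        · refine ⟨-(e 1 : ℤ) + ⌊β * V + α⌋ - ⌊β * U + α⌋, Or.inr ?_⟩
          rw [Int.fract, Int.fract]
          push_cast
          linear_combination β * hE - hmul
  intro j hj
  exact main (j - 1)
end

section
/- Let β > 1 be the largest real root of x⁴ − x³ − x² − x + 1 = 0 (a Salem number). If α ∈ (1/(β⁴+1), β/(β⁴+1)), then T_{α,β} has matching after four steps: u_4 = v_4. In fact u_1 = α, u_2 = (β+1)α, u_3 = (β²+β+1)α, while v_1 = β + α − 1, v_2 = (β+1)α + 1/β − 1/β², and v_3 = (β²+β+1)α − 1/β. -/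
open MeasureTheory Finset

set_option maxHeartbeats 1000000 in
theorem salem_matching_after_four_steps (β : ℝ) (hβ1 : 1 < β)
    (hroot : β ^ 4 - β ^ 3 - β ^ 2 - β + 1 = 0)
    (hmax : ∀ y : ℝ, y ^ 4 - y ^ 3 - y ^ 2 - y + 1 = 0 → y ≤ β)
    (α : ℝ) (hα : α ∈ Set.Ioo (1 / (β ^ 4 + 1)) (β / (β ^ 4 + 1))) :
    uSeq β α 4 = vSeq β α 4 ∧
    uSeq β α 1 = α ∧ uSeq β α 2 = (β + 1) * α ∧ uSeq β α 3 = (β ^ 2 + β + 1) * α ∧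
    vSeq β α 1 = β + α - 1 ∧ vSeq β α 2 = (β + 1) * α + 1 / β - 1 / β ^ 2 ∧
    vSeq β α 3 = (β ^ 2 + β + 1) * α - 1 / β := by
  obtain ⟨hl, hu⟩ := hα
  have hβ0 : (0:ℝ) < β := by linarith
  have hβne : β ≠ 0 := ne_of_gt hβ0
  have hDpos : (0:ℝ) < β ^ 4 + 1 := by positivity
  have hαl : 1 < α * (β ^ 4 + 1) := by
    rw [div_lt_iff₀ hDpos] at hl; linarith
  have hαu : α * (β ^ 4 + 1) < β := by
    rw [lt_div_iff₀ hDpos] at hu; linarith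
  have hα0 : 0 < α := by nlinarith
  have hA : β ^ 3 < β ^ 2 + β + 1 := by nlinarith
  have hB : β + 1 < β ^ 2 := by
    nlinarith [sq_nonneg (β - 1), sq_nonneg (β ^ 2 - β - 1), sq_nonneg (β ^ 2 - 2),
      mul_pos (sub_pos.2 hβ1) (sub_pos.2 hβ1)]
  have hC : α * (β ^ 2 + β + 1) < 1 := by nlinarith
  have hC' : 1 < α * (β ^ 3 + β ^ 2 + β) := by nlinarith
  have hu1 : uSeq β α 1 = α := rfl
  have hu2 : uSeq β α 2 = (β + 1) * α := by
    show Int.fract (β * α + α) = _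
    rw [Int.fract_eq_self.2 ⟨by nlinarith, by nlinarith⟩]; ring
  have hu3 : uSeq β α 3 = (β ^ 2 + β + 1) * α := by
    show Int.fract (β * uSeq β α 2 + α) = _
    rw [hu2, Int.fract_eq_self.2 ⟨by nlinarith, by nlinarith⟩]; ring
  have hv1 : vSeq β α 1 = β + α - 1 := by
    show Int.fract (β + α) = _
    rw [Int.fract_eq_iff]
    exact ⟨by nlinarith, by nlinarith, 1, by push_cast; ring⟩
  have hv2 : vSeq β α 2 = (β + 1) * α + 1 / β - 1 / β ^ 2 := by
    show Int.fract (β * vSeq β α 1 + α) = _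
    rw [hv1, Int.fract_eq_iff]
    refine ⟨?_, ?_, 1, ?_⟩
    · have h1 : (0:ℝ) < 1 / β := by positivity
      have h2 : 1 / β ^ 2 < 1 / β := by
        rw [div_lt_div_iff₀ (by positivity) hβ0]; nlinarith
      nlinarith
    · have hβ2 : (0:ℝ) < β ^ 2 := by positivity
      have hC2 : β - 1 < α * β ^ 4 := by nlinarith [hαl, pow_pos hβ0 4]
      rw [← mul_lt_mul_iff_of_pos_right hβ2]
      have e : ((β + 1) * α + 1 / β - 1 / β ^ 2) * β ^ 2
          = (β + 1) * α * β ^ 2 + β - 1 := by field_simp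
      rw [e]
      nlinarith [mul_pos hβ2 (show (0:ℝ) < 1 - α * (β ^ 2 + β + 1) by linarith), hC2]
    · push_cast
      field_simp
      linear_combination hroot
  have hv3 : vSeq β α 3 = (β ^ 2 + β + 1) * α - 1 / β := by
    show Int.fract (β * vSeq β α 2 + α) = _
    rw [hv2, Int.fract_eq_iff]
    refine ⟨?_, ?_, 1, ?_⟩
    · have h1 : 1 / β < α * (β ^ 2 + β + 1) := by
        rw [div_lt_iff₀ hβ0]; nlinarith
      nlinarith
    · have h2 : (0:ℝ) < 1 / β := by positivity
      nlinarith
    · push_cast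
      field_simp
      ring
  have hv4 : uSeq β α 4 = vSeq β α 4 := by
    show Int.fract (β * uSeq β α 3 + α) = Int.fract (β * vSeq β α 3 + α)
    rw [hu3, hv3]
    have key : β * ((β ^ 2 + β + 1) * α - 1 / β) + α
        = (β * ((β ^ 2 + β + 1) * α) + α) - ((1:ℤ):ℝ) := by
      push_cast; field_simp; ring
    rw [key, Int.fract_sub_intCast]
  exact ⟨hv4, hu1, hu2, hu3, hv1, hv2, hv3⟩
end

section
/- Let β > 1 and α ∈ [0,1). If T_{α,β} has matching, i.e. u_n = v_n for some n ≥ 1, then β is an algebraic integer: there exist m ≥ 1 and integers c_1, …, c_m such that β^m = c_1 β^{m−1} + c_2 β^{m−2} + ⋯ + c_{m−1} β + c_m. -/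
open MeasureTheory Finset

lemma orb_repr (β α x : ℝ) (k : ℕ) : ∃ c : ℕ → ℤ,
    orb β α x k = β ^ k * x + (∑ i ∈ Finset.range k, β ^ i) * α
      + ∑ i ∈ Finset.range k, (c i : ℝ) * β ^ i := by
  induction k with
  | zero => exact ⟨0, by simp [orb]⟩
  | succ k ih =>
    obtain ⟨c, hc⟩ := ih
    refine ⟨fun i => if i = 0 then -⌊β * orb β α x k + α⌋ else c (i - 1), ?_⟩
    have h1 : orb β α x (k+1) = β * orb β α x k + α - ⌊β * orb β α x k + α⌋ := rfl
    have e1 : ∑ i ∈ Finset.range k, β ^ (i+1) = β * ∑ i ∈ Finset.range k, β ^ i := by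
      rw [Finset.mul_sum]; exact Finset.sum_congr rfl fun i _ => by ring
    have e2 : ∑ i ∈ Finset.range k, (c i : ℝ) * β ^ (i+1)
        = β * ∑ i ∈ Finset.range k, (c i : ℝ) * β ^ i := by
      rw [Finset.mul_sum]; exact Finset.sum_congr rfl fun i _ => by ring
    rw [h1, Finset.sum_range_succ', Finset.sum_range_succ']
    have e3 : ∀ i ∈ Finset.range k,
        ((if i + 1 = 0 then -⌊β * orb β α x k + α⌋ else c (i + 1 - 1) : ℤ) : ℝ) * β ^ (i+1)
          = (c i : ℝ) * β ^ (i+1) := fun i _ => by norm_num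
    rw [Finset.sum_congr rfl e3, e1, e2, hc]
    norm_num
    simp only [Int.fract]
    ring

theorem matching_implies_algebraic_integer (β α : ℝ) (hβ : 1 < β)
    (hα : α ∈ Set.Ico (0 : ℝ) 1) (h : HasMatching β α) :
    ∃ m : ℕ, 1 ≤ m ∧ ∃ c : ℕ → ℤ,
      β ^ m = ∑ i ∈ Finset.range m, (c (i + 1) : ℝ) * β ^ (m - 1 - i) := by
  obtain ⟨n, hn, huv⟩ := h
  obtain ⟨k, rfl⟩ : ∃ k, n = k + 1 := ⟨n - 1, by omega⟩
  obtain ⟨c, hc⟩ := orb_repr β α α k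
  obtain ⟨d, hd⟩ := orb_repr β α (Int.fract (β + α)) k
  have hfr : Int.fract (β + α) = β + α - ⌊β + α⌋ := rfl
  have key : β ^ (k + 1) = (⌊β + α⌋ : ℝ) * β ^ k
      + ∑ i ∈ Finset.range k, ((c i - d i : ℤ) : ℝ) * β ^ i := by
    have := huv
    unfold uSeq vSeq at this
    simp only [Nat.add_sub_cancel] at this
    rw [hc, hd, hfr] at this
    have esub : ∑ i ∈ Finset.range k, ((c i - d i : ℤ) : ℝ) * β ^ i
        = ∑ i ∈ Finset.range k, (c i : ℝ) * β ^ i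
          - ∑ i ∈ Finset.range k, (d i : ℝ) * β ^ i := by
      rw [← Finset.sum_sub_distrib]; exact Finset.sum_congr rfl fun i _ => by push_cast; ring
    rw [esub]
    linear_combination -this
  refine ⟨k + 1, by omega, fun j => if j = 1 then ⌊β + α⌋ else c (k + 1 - j) - d (k + 1 - j), ?_⟩
  rw [Finset.sum_range_succ']
  have e3 : ∀ i ∈ Finset.range k,
      ((if i + 1 + 1 = 1 then ⌊β + α⌋ else c (k + 1 - (i+1+1)) - d (k + 1 - (i+1+1)) : ℤ) : ℝ)
        * β ^ (k + 1 - 1 - (i + 1))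
      = ((c (k - 1 - i) - d (k - 1 - i) : ℤ) : ℝ) * β ^ (k - 1 - i) := by
    intro i hi
    have : i + 1 + 1 ≠ 1 := by omega
    rw [if_neg this, show k + 1 - (i+1+1) = k - 1 - i from by omega,
      show k + 1 - 1 - (i + 1) = k - 1 - i from by omega]
  rw [Finset.sum_congr rfl e3, Finset.sum_range_reflect (fun i => ((c i - d i : ℤ) : ℝ) * β ^ i)]
  simp only [if_pos rfl, if_true, Nat.add_sub_cancel, Nat.sub_zero]
  rw [key]
  ring
end
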